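/- arXiv:1910.02193 — 5 statements merged into one kernel-verified Lean document; each statement's English description precedes it below -/
import Mathlib

section
/- Let P and P~ be ergodic row-stochastic n×n Markov transition matrices with stationary distributions π and π~ respectively (π^T P = π^T, π~^T P~ = π~^T). Suppose the eigenvalues of P are real and can be ordered 1 = λ_1 > λ_2 ≥ ... ≥ λ_n, with λ_i < 1 for all i ≥ 2. Then ‖π − π~‖_1 ≤ (Σ_{i=2}^n 1/(1 − λ_i)) · ‖P − P~‖_∞, where ‖A‖_∞ = max_i Σ_j |A(i,j)| is the maximum absolute row sum. -/
open scoped BigOperators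
open Matrix

noncomputable section

namespace MJ

/-- Euclidean (ℓ2) norm of a finite vector. -/
def l2 {k : ℕ} (v : Fin k → ℝ) : ℝ := Real.sqrt (∑ j, v j ^ 2)

/-- ℓ1 norm of a finite vector. -/
def l1 {k : ℕ} (v : Fin k → ℝ) : ℝ := ∑ i, |v i|

/-- Maximum absolute row sum (matrix ∞-norm). -/
def rowSumNorm {m k : ℕ} (A : Matrix (Fin m) (Fin k) ℝ) : ℝ := ⨆ i, ∑ j, |A i j|

/-- Frobenius norm. -/
def frob {m k : ℕ} (A : Matrix (Fin m) (Fin k) ℝ) : ℝ := Real.sqrt (∑ i, ∑ j, A i j ^ 2)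

/-- Spectral norm (ℓ2 operator norm). -/
def spec {m k : ℕ} (A : Matrix (Fin m) (Fin k) ℝ) : ℝ :=
  sSup {c : ℝ | ∃ x : Fin k → ℝ, l2 x ≤ 1 ∧ c = l2 (A.mulVec x)}

/-- `i`-th largest singular value (1-indexed), via Courant–Fischer max-min. -/
def singVal {m k : ℕ} (A : Matrix (Fin m) (Fin k) ℝ) (i : ℕ) : ℝ :=
  sSup {c : ℝ | ∃ V : Submodule ℝ (Fin k → ℝ), Module.finrank ℝ V = i ∧
    ∀ x ∈ V, c * l2 x ≤ l2 (A.mulVec x)}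

/-- Row-stochastic matrix. -/
def RowStochastic {k : ℕ} (P : Matrix (Fin k) (Fin k) ℝ) : Prop :=
  (∀ i j, 0 ≤ P i j) ∧ ∀ i, ∑ j, P i j = 1

/-- Probability vector. -/
def IsProbVec {k : ℕ} (v : Fin k → ℝ) : Prop := (∀ i, 0 ≤ v i) ∧ ∑ i, v i = 1

/-- Stationary distribution: a probability vector with πᵀ P = πᵀ. -/
def IsStationary {k : ℕ} (P : Matrix (Fin k) (Fin k) ℝ) (piv : Fin k → ℝ) : Prop :=
  IsProbVec piv ∧ ∀ j, ∑ i, piv i * P i j = piv j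

/-- Ergodicity (irreducible + aperiodic ⟺ primitive for finite chains). -/
def Ergodic' {k : ℕ} (P : Matrix (Fin k) (Fin k) ℝ) : Prop :=
  ∃ t : ℕ, ∀ i j, 0 < (P ^ t) i j

/-- ε-mixing time: τ(ε) = min{t : max_i (1/2)‖(P^t)(i,:) − π‖₁ ≤ ε}. -/
def mixingTime {k : ℕ} (P : Matrix (Fin k) (Fin k) ℝ) (piv : Fin k → ℝ) (ε : ℝ) : ℕ :=
  sInf {t : ℕ | ∀ i, (1/2) * ∑ j, |(P ^ t) i j - piv j| ≤ ε}

/-- Full SVD decomposition predicate: A = U S Vᵀ with U, V orthogonal and S diagonal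
with nonnegative entries arranged in descending order. -/
def IsSVD {m k : ℕ} (A : Matrix (Fin m) (Fin k) ℝ) (U : Matrix (Fin m) (Fin m) ℝ)
    (S : Matrix (Fin m) (Fin k) ℝ) (V : Matrix (Fin k) (Fin k) ℝ) : Prop :=
  Uᵀ * U = 1 ∧ Vᵀ * V = 1 ∧ A = U * S * Vᵀ ∧
  (∀ (i : Fin m) (j : Fin k), (i : ℕ) ≠ (j : ℕ) → S i j = 0) ∧
  (∀ i j, 0 ≤ S i j) ∧
  (∀ (a b : ℕ) (ham : a < m) (hak : a < k) (hbm : b < m) (hbk : b < k),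
    a ≤ b → S ⟨b, hbm⟩ ⟨b, hbk⟩ ≤ S ⟨a, ham⟩ ⟨a, hak⟩)

/-- `Ur` consists of the first `r` left singular vectors of `A`. -/
def IsLeftSingTrunc {m k : ℕ} (A : Matrix (Fin m) (Fin k) ℝ) (r : ℕ)
    (Ur : Matrix (Fin m) (Fin r) ℝ) : Prop :=
  ∃ U S V, IsSVD A U S V ∧ ∃ h : r ≤ m, ∀ (i : Fin m) (j : Fin r),
    Ur i j = U i ⟨(j : ℕ), lt_of_lt_of_le j.isLt h⟩

/-- `Vr` consists of the first `r` right singular vectors of `A`. -/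
def IsRightSingTrunc {m k : ℕ} (A : Matrix (Fin m) (Fin k) ℝ) (r : ℕ)
    (Vr : Matrix (Fin k) (Fin r) ℝ) : Prop :=
  IsLeftSingTrunc Aᵀ r Vr

/-- The matrix (I − EEᵀ)(FFᵀ), whose spectral/Frobenius norm is the sinΘ distance
between the column spaces of `E` and `F` (for `E`, `F` with orthonormal columns). -/
def sinThetaMat {k r : ℕ} (E F : Matrix (Fin k) (Fin r) ℝ) : Matrix (Fin k) (Fin k) ℝ :=
  (1 - E * Eᵀ) * (F * Fᵀ)

/-- Membership matrix: each row has exactly one entry 1 and all others 0. -/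
def IsMembership {k r : ℕ} (M : Matrix (Fin k) (Fin r) ℝ) : Prop :=
  ∀ i, ∃ j, M i j = 1 ∧ ∀ j', j' ≠ j → M i j' = 0

/-- A family of finsets forming a partition of `Fin k`. -/
def IsPartition {k r : ℕ} (Ω : Fin r → Finset (Fin k)) : Prop :=
  (∀ a b, a ≠ b → Disjoint (Ω a) (Ω b)) ∧ Finset.univ.biUnion Ω = Finset.univ

/-- `P` is aggregatable w.r.t. partition `Ω`: rows within the same cluster coincide. -/
def Aggregatable {k r : ℕ} (P : Matrix (Fin k) (Fin k) ℝ) (Ω : Fin r → Finset (Fin k)) : Prop :=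
  ∀ s, ∀ i ∈ Ω s, ∀ j ∈ Ω s, ∀ c, P i c = P j c

/-- Misclustering rate: min over bijections of the relative misclustering counts. -/
def MR {k r : ℕ} (Ω Ωh : Fin r → Finset (Fin k)) : ℝ :=
  ⨅ σ : Equiv.Perm (Fin r), ∑ j, (((Ω j) \ (Ωh (σ j))).card : ℝ) / ((Ω j).card : ℝ)

/-- k-means objective on the rows of `U`. -/
def kmeansObj {k r : ℕ} (U : Matrix (Fin k) (Fin r) ℝ) (Ωh : Fin r → Finset (Fin k))
    (c : Fin r → Fin r → ℝ) : ℝ :=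
  ∑ s, ∑ i ∈ Ωh s, ∑ j, (U i j - c s j) ^ 2

/-- Optimal value of the k-means problem on the rows of `U`. -/
def kmeansOpt {k r : ℕ} (U : Matrix (Fin k) (Fin r) ℝ) : ℝ :=
  sInf {v : ℝ | ∃ Ωh c, IsPartition Ωh ∧ v = kmeansObj U Ωh c}

/-- A (1+ε) approximate solution of the k-means problem on the rows of `U`. -/
def IsApproxKMeans {k r : ℕ} (U : Matrix (Fin k) (Fin r) ℝ) (ε : ℝ)
    (Ωh : Fin r → Finset (Fin k)) (c : Fin r → Fin r → ℝ) : Prop :=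
  IsPartition Ωh ∧ kmeansObj U Ωh c ≤ (1 + ε) * kmeansOpt U

/-- Optimal value of the k-means problem in membership-matrix form. -/
def kmeansOptM {k r : ℕ} (U : Matrix (Fin k) (Fin r) ℝ) : ℝ :=
  sInf {v : ℝ | ∃ (M : Matrix (Fin k) (Fin r) ℝ) (C : Matrix (Fin r) (Fin r) ℝ),
    IsMembership M ∧ v = frob (M * C - U) ^ 2}

/-- Number of t ∈ {1,…,N} with x_{t−1} = i. -/
def countState {k N : ℕ} (x : Fin (N+1) → Fin k) (i : Fin k) : ℕ :=
  (Finset.univ.filter fun t : Fin N => x t.castSucc = i).card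

/-- Number of t ∈ {1,…,N} with x_{t−1} = i and x_t = j. -/
def countTrans {k N : ℕ} (x : Fin (N+1) → Fin k) (i j : Fin k) : ℕ :=
  (Finset.univ.filter fun t : Fin N => x t.castSucc = i ∧ x t.succ = j).card

/-- Empirical state distribution. -/
def empPi {k N : ℕ} (x : Fin (N+1) → Fin k) (i : Fin k) : ℝ :=
  (countState x i : ℝ) / (N : ℝ)

/-- Empirical frequency matrix. -/
def empF {k N : ℕ} (x : Fin (N+1) → Fin k) : Matrix (Fin k) (Fin k) ℝ :=
  Matrix.of fun i j => (countTrans x i j : ℝ) / (N : ℝ)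

/-- Empirical transition matrix (uniform row if a state never occurs). -/
def empMatrix {k N : ℕ} (x : Fin (N+1) → Fin k) : Matrix (Fin k) (Fin k) ℝ :=
  Matrix.of fun i j =>
    if countState x i = 0 then 1 / (k : ℝ)
    else (countTrans x i j : ℝ) / (countState x i : ℝ)

/-- Probability weight of a finite Markov-chain path with initial distribution `pi0`. -/
def pathWeight {k : ℕ} (N : ℕ) (P : Matrix (Fin k) (Fin k) ℝ) (pi0 : Fin k → ℝ)
    (x : Fin (N+1) → Fin k) : ℝ :=
  pi0 (x 0) * ∏ t : Fin N, P (x t.castSucc) (x t.succ)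

/-- Probability of an event over Markov-chain trajectories of length N+1. -/
def pathProb {k : ℕ} (N : ℕ) (P : Matrix (Fin k) (Fin k) ℝ) (pi0 : Fin k → ℝ)
    (E : Set ((Fin (N+1)) → Fin k)) : ℝ :=
  ∑ x : Fin (N+1) → Fin k, E.indicator (pathWeight N P pi0) x

end MJ

/-!
Put `B = I - P + 𝟙πᵀ` and let `Z = B⁻¹` be the fundamental matrix of the chain. By Brauer's
theorem the spectrum of `B` is that of `I - P` with the eigenvalue `0` (eigenvector `𝟙`) moved
to `1`, so `tr Z = 1 + ∑_{i ≥ 2} 1/(1 - λᵢ)`. Stationarity of `π̃` for `P̃` gives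
`(π - π̃)ᵀ B = π̃ᵀ(P - P̃) =: fᵀ`, i.e. `(π - π̃)ᵀ = fᵀ Z`, where `f` has zero sum and
`‖f‖₁ ≤ ‖P - P̃‖_∞`. Since `Z - PZ = I - 𝟙πᵀ` and `π > 0`, a maximum principle shows that every
column of `Z` is largest on the diagonal; hence `|(fᵀZ)_j| ≤ ∑ᵢ |fᵢ| (Z_jj - Z_ij)`, and summing
over `j` with `Z𝟙 = 𝟙` produces the factor `tr Z - 1`.
-/

open Matrix Polynomial Finset

namespace Matrix

section Charpoly

variable {ι K : Type*} [Fintype ι] [DecidableEq ι] [Field K]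

theorem charpoly_one_sub_of_charpoly_eq_prod [Infinite K] {M : Matrix ι ι K} {μ : ι → K}
    (hM : M.charpoly = ∏ i, (X - C (μ i))) : (1 - M).charpoly = ∏ i, (X - C (1 - μ i)) := by
  refine Polynomial.funext fun x => ?_
  have hneg : scalar ι x - (1 - M) = -(scalar ι (1 - x) - M) := by
    rw [map_sub, map_one]; abel
  rw [eval_charpoly, hneg, det_neg, ← eval_charpoly, hM, ← Finset.card_univ,
    ← Finset.prod_const, eval_prod, eval_prod, ← Finset.prod_mul_distrib]
  refine Finset.prod_congr rfl fun i _ => ?_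
  simp only [eval_sub, eval_X, eval_C]
  ring

/-- Brauer's theorem. -/
theorem charpoly_add_vecMulVec [Infinite K] {A : Matrix ι ι K} {u v : ι → K} {a : K}
    (hu : A *ᵥ u = a • u) :
    (X - C a) * (A + vecMulVec u v).charpoly = (X - C (a + v ⬝ᵥ u)) * A.charpoly := by
  refine eq_of_infinite_eval_eq _ _ (((Set.finite_singleton a).union
    (finite_setOfPred_isRoot A.charpoly_monic.ne_zero)).infinite_compl.mono fun x hx => ?_)
  simp only [Set.mem_compl_iff, Set.mem_union, Set.mem_singleton_iff, Set.mem_ofPred_eq,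
    not_or] at hx
  obtain ⟨hxa, hroot⟩ := hx
  replace hxa : x - a ≠ 0 := sub_ne_zero.mpr hxa
  set M := scalar ι x - A with hMdef
  have hM : IsUnit M.det := isUnit_iff_ne_zero.mpr (eval_charpoly A x ▸ hroot)
  have : Invertible M := M.invertibleOfIsUnitDet hM
  have hMu : M⁻¹ *ᵥ u = (x - a)⁻¹ • u := by
    refine inv_mulVec_eq_vec ?_
    rw [mulVec_smul, sub_mulVec, hu, scalar_apply]
    ext i
    simp only [Pi.smul_apply, Pi.sub_apply, mulVec_diagonal, smul_eq_mul]
    field_simp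
  have hsplit : scalar ι x - (A + vecMulVec u v) =
      M + replicateCol Unit (-u) * replicateRow Unit v := by
    rw [← vecMulVec_eq, neg_vecMulVec, hMdef]; abel
  simp only [Set.mem_ofPred_eq, eval_mul, eval_sub, eval_X, eval_C, eval_charpoly, hsplit,
    det_add_replicateCol_mul_replicateRow hM, det_unique, add_apply, one_apply_eq]
  rw [Matrix.mul_assoc, ← replicateCol_mulVec, replicateRow_mul_replicateCol_apply, mulVec_neg,
    hMu, dotProduct_neg, dotProduct_smul, smul_eq_mul, ← hMdef]
  field_simp
  ring

section CharpolyEqProd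

variable {B : Matrix ι ι K} {s : Multiset K}

theorem det_eq_prod_of_charpoly_eq_prod (hB : B.charpoly = (s.map fun a => X - C a).prod) :
    B.det = s.prod := by
  rw [det_eq_prod_roots_charpoly_of_splits (hB ▸ Splits.multisetProd (by simp [Splits.X_sub_C])),
    hB, roots_multiset_prod_X_sub_C]

theorem charpoly_inv_of_charpoly_eq_prod [Infinite K]
    (hB : B.charpoly = (s.map fun a => X - C a).prod) (hs : (0 : K) ∉ s) :
    B⁻¹.charpoly = (s.map fun a => X - C a⁻¹).prod := by
  have hdet := det_eq_prod_of_charpoly_eq_prod hB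
  have hcard : s.card = Fintype.card ι := by
    rw [← natDegree_multiset_prod_X_sub_C_eq_card, ← hB, charpoly_natDegree_eq_dim]
  have hdet0 : B.det ≠ 0 := hdet ▸ Multiset.prod_ne_zero hs
  refine eq_of_infinite_eval_eq _ _ ((Set.finite_singleton 0).infinite_compl.mono fun x hx => ?_)
  replace hx : x ≠ 0 := hx
  refine mul_left_cancel₀ hdet0 ?_
  have hmul : B * (scalar ι x - B⁻¹) = (-x) • (scalar ι x⁻¹ - B) := by
    rw [Matrix.mul_sub, mul_nonsing_inv _ (isUnit_iff_ne_zero.mpr hdet0), smul_sub, scalar_apply,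
      scalar_apply, ← smul_one_eq_diagonal, ← smul_one_eq_diagonal, smul_smul, Matrix.mul_smul,
      Matrix.mul_one, neg_mul, mul_inv_cancel₀ hx]
    module
  calc B.det * eval x B⁻¹.charpoly = ((-x) • (scalar ι x⁻¹ - B)).det := by
        rw [eval_charpoly, ← det_mul, hmul]
    _ = (s.map fun a => a * (x - a⁻¹)).prod := by
        rw [det_smul, ← eval_charpoly, hB, ← hcard, ← Multiset.prod_replicate,
          ← Multiset.map_const', eval_multiset_prod, Multiset.map_map, ← Multiset.prod_map_mul]
        refine congrArg _ (Multiset.map_congr rfl fun a ha => ?_)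
        have : a ≠ 0 := fun h => hs (h ▸ ha)
        simp only [Function.comp_apply, eval_sub, eval_X, eval_C, neg_mul]
        field_simp
        ring
    _ = B.det * eval x (s.map fun a => X - C a⁻¹).prod := by
        rw [hdet, eval_multiset_prod, Multiset.map_map, Multiset.prod_map_mul, Multiset.map_id']
        simp

theorem trace_inv_of_charpoly_eq_prod [Infinite K]
    (hB : B.charpoly = (s.map fun a => X - C a).prod) (hs : (0 : K) ∉ s) :
    B⁻¹.trace = (s.map (·⁻¹)).sum := by
  have hinv := charpoly_inv_of_charpoly_eq_prod hB hs
  have hmap : (s.map fun a => X - C a⁻¹) = (s.map (·⁻¹)).map fun a => X - C a := by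
    rw [Multiset.map_map]; rfl
  rw [trace_eq_sum_roots_charpoly_of_splits (hinv ▸ Splits.multisetProd (by simp [Splits.X_sub_C])),
    hinv, hmap, roots_multiset_prod_X_sub_C]

end CharpolyEqProd

end Charpoly

theorem sum_abs_vecMul_le_of_sum_eq_zero {ι : Type*} [Fintype ι] {f : ι → ℝ} {W : Matrix ι ι ℝ}
    (hf : ∑ i, f i = 0) (hW : W *ᵥ 1 = 1) (hdiag : ∀ i j, W i j ≤ W j j) :
    ∑ j, |(f ᵥ* W) j| ≤ (W.trace - 1) * ∑ i, |f i| := by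
  have hrow (i : ι) : ∑ j, W i j = 1 := by simpa [mulVec, dotProduct] using congrFun hW i
  calc ∑ j, |(f ᵥ* W) j| = ∑ j, |∑ i, f i * (W i j - W j j)| := by
        refine sum_congr rfl fun j _ => ?_
        simp [vecMul, dotProduct, mul_sub, ← sum_mul, hf]
    _ ≤ ∑ j, ∑ i, |f i| * (W j j - W i j) := by
        refine sum_le_sum fun j _ => (abs_sum_le_sum_abs _ _).trans_eq (sum_congr rfl fun i _ => ?_)
        rw [abs_mul, abs_sub_comm, abs_of_nonneg (sub_nonneg.mpr (hdiag i j))]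
    _ = (W.trace - 1) * ∑ i, |f i| := by
        rw [sum_comm, mul_sum]
        refine sum_congr rfl fun i _ => ?_
        rw [← mul_sum, sum_sub_distrib, hrow, trace, mul_comm]
        rfl

end Matrix

namespace MJ

variable {k : ℕ} {P Q : Matrix (Fin k) (Fin k) ℝ} {π ρ : Fin k → ℝ}

theorem RowStochastic.mulVec_one (hP : RowStochastic P) : P *ᵥ 1 = 1 := by
  ext i; simp [mulVec, dotProduct, hP.2 i]

theorem RowStochastic.sum_vecMul_sub_eq_zero (hP : RowStochastic P) (hQ : RowStochastic Q)
    (ρ : Fin k → ℝ) : ∑ j, (ρ ᵥ* (P - Q)) j = 0 := by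
  have h := dotProduct_mulVec ρ (P - Q) 1
  rw [sub_mulVec, hP.mulVec_one, hQ.mulVec_one, sub_self, dotProduct_zero] at h
  simpa [dotProduct] using h.symm

theorem RowStochastic.apply_le_of_lt_mulVec (hP : RowStochastic P) {w : Fin k → ℝ} {j : Fin k}
    (hw : ∀ i, i ≠ j → w i < (P *ᵥ w) i) (i : Fin k) : w i ≤ w j := by
  obtain ⟨m, -, hm⟩ := exists_max_image univ w ⟨i, mem_univ i⟩
  obtain rfl | hmj := eq_or_ne m j
  · exact hm i (mem_univ i)
  · refine absurd (hw m hmj) (not_lt.mpr ?_)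
    calc (P *ᵥ w) m = ∑ c, P m c * w c := rfl
      _ ≤ ∑ c, P m c * w m :=
        sum_le_sum fun c _ => mul_le_mul_of_nonneg_left (hm c (mem_univ c)) (hP.1 m c)
      _ = w m := by rw [← sum_mul, hP.2 m, one_mul]

theorem IsProbVec.dotProduct_one (hπ : IsProbVec π) : π ⬝ᵥ 1 = 1 := by
  simp [dotProduct, hπ.2]

theorem IsStationary.vecMul_eq (hπ : IsStationary P π) : π ᵥ* P = π := funext hπ.2

theorem IsStationary.vecMul_pow (hπ : IsStationary P π) (t : ℕ) : π ᵥ* (P ^ t) = π := by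
  induction t with
  | zero => simp
  | succ t ih => rw [pow_succ, ← vecMul_vecMul, ih, hπ.vecMul_eq]

theorem IsStationary.pos (hπ : IsStationary P π) (hP : Ergodic' P) (j : Fin k) : 0 < π j := by
  obtain ⟨t, ht⟩ := hP
  obtain ⟨i, -, hi⟩ : ∃ i ∈ univ, (0 : ℝ) < π i :=
    exists_lt_of_sum_lt (by simp [hπ.1.2])
  rw [← hπ.vecMul_pow t]
  exact sum_pos' (fun i _ => mul_nonneg (hπ.1.1 i) (ht i j).le)
    ⟨i, mem_univ i, mul_pos hi (ht i j)⟩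

theorem sum_abs_vecMul_le_rowSumNorm (hρ : IsProbVec ρ) (A : Matrix (Fin k) (Fin k) ℝ) :
    ∑ j, |(ρ ᵥ* A) j| ≤ rowSumNorm A := by
  have hrow (i : Fin k) : ∑ j, |A i j| ≤ rowSumNorm A :=
    le_ciSup (f := fun i => ∑ j, |A i j|) (Set.finite_range _).bddAbove i
  calc ∑ j, |(ρ ᵥ* A) j| ≤ ∑ j, ∑ i, ρ i * |A i j| := by
        refine sum_le_sum fun j _ => (abs_sum_le_sum_abs (fun i => ρ i * A i j) univ).trans_eq
          (sum_congr rfl fun i _ => ?_)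
        rw [abs_mul, abs_of_nonneg (hρ.1 i)]
    _ = ∑ i, ρ i * ∑ j, |A i j| := by rw [sum_comm]; simp [mul_sum]
    _ ≤ ∑ i, ρ i * rowSumNorm A :=
        sum_le_sum fun i _ => mul_le_mul_of_nonneg_left (hrow i) (hρ.1 i)
    _ = rowSumNorm A := by rw [← sum_mul, hρ.2, one_mul]

def fundamentalMatrix (P : Matrix (Fin k) (Fin k) ℝ) (π : Fin k → ℝ) : Matrix (Fin k) (Fin k) ℝ :=
  (1 - P + vecMulVec 1 π)⁻¹

theorem fundamentalMatrix_mulVec_one (hP : RowStochastic P) (hπ : IsProbVec π)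
    (hB : IsUnit (1 - P + vecMulVec 1 π).det) : fundamentalMatrix P π *ᵥ 1 = 1 := by
  have h1 : (1 - P + vecMulVec 1 π) *ᵥ 1 = 1 := by
    rw [add_mulVec, sub_mulVec, hP.mulVec_one, vecMulVec_mulVec, hπ.dotProduct_one]
    simp
  calc fundamentalMatrix P π *ᵥ 1 = fundamentalMatrix P π *ᵥ ((1 - P + vecMulVec 1 π) *ᵥ 1) := by
        rw [h1]
    _ = 1 := by rw [fundamentalMatrix, mulVec_mulVec, nonsing_inv_mul _ hB, one_mulVec]

theorem vecMul_fundamentalMatrix (hπ : IsStationary P π)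
    (hB : IsUnit (1 - P + vecMulVec 1 π).det) : π ᵥ* fundamentalMatrix P π = π := by
  have h1 : π ᵥ* (1 - P + vecMulVec 1 π) = π := by
    rw [vecMul_add, vecMul_sub, hπ.vecMul_eq, vecMul_vecMulVec, hπ.1.dotProduct_one]
    simp
  calc π ᵥ* fundamentalMatrix P π = (π ᵥ* (1 - P + vecMulVec 1 π)) ᵥ* fundamentalMatrix P π := by
        rw [h1]
    _ = π := by rw [fundamentalMatrix, vecMul_vecMul, mul_nonsing_inv _ hB, vecMul_one]

theorem one_sub_mul_fundamentalMatrix (hπ : IsStationary P π)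
    (hB : IsUnit (1 - P + vecMulVec 1 π).det) :
    (1 - P) * fundamentalMatrix P π = 1 - vecMulVec 1 π := by
  have h : (1 - P + vecMulVec 1 π) * fundamentalMatrix P π = 1 := mul_nonsing_inv _ hB
  rw [add_mul, vecMulVec_mul, vecMul_fundamentalMatrix hπ hB] at h
  exact eq_sub_of_add_eq h

theorem fundamentalMatrix_le_diag (hP : RowStochastic P) (hπ : IsStationary P π)
    (hPe : Ergodic' P) (hB : IsUnit (1 - P + vecMulVec 1 π).det) (i j : Fin k) :
    fundamentalMatrix P π i j ≤ fundamentalMatrix P π j j := by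
  -- off the diagonal, the `j`-th column `w` of `Z` satisfies `w - P w = -π j < 0`
  refine hP.apply_le_of_lt_mulVec (w := fun i => fundamentalMatrix P π i j) (fun i hij => ?_) i
  have h := congrFun (congrFun (one_sub_mul_fundamentalMatrix hπ hB) i) j
  simp only [sub_mul, one_mul, Matrix.sub_apply, one_apply_ne hij, vecMulVec_apply,
    Pi.one_apply] at h
  have := hπ.pos hPe j
  change _ < ∑ c, P i c * fundamentalMatrix P π c j
  rw [← mul_apply]
  linarith

theorem sub_eq_vecMul_fundamentalMatrix (hπ : IsStationary P π) (hρ : IsStationary Q ρ)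
    (hB : IsUnit (1 - P + vecMulVec 1 π).det) :
    π - ρ = (ρ ᵥ* (P - Q)) ᵥ* fundamentalMatrix P π := by
  have h1 : (π - ρ) ᵥ* (1 - P + vecMulVec 1 π) = ρ ᵥ* (P - Q) := by
    rw [vecMul_add, vecMul_sub, vecMul_vecMulVec, sub_dotProduct, hπ.1.dotProduct_one,
      hρ.1.dotProduct_one, sub_self, zero_smul, add_zero,
      vecMul_one, sub_vecMul, hπ.vecMul_eq, vecMul_sub, hρ.vecMul_eq]
    abel
  rw [← h1, fundamentalMatrix, vecMul_vecMul, mul_nonsing_inv _ hB, vecMul_one]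

section Eigenvalues

variable {n : ℕ} {P : Matrix (Fin (n + 1)) (Fin (n + 1)) ℝ} {π : Fin (n + 1) → ℝ}
  {lam : Fin (n + 1) → ℝ}

theorem charpoly_one_sub_add_vecMulVec (hP : RowStochastic P) (hπ : IsProbVec π)
    (hchar : P.charpoly = ∏ i, (X - C (lam i))) (hlam0 : lam 0 = 1) :
    (1 - P + vecMulVec 1 π).charpoly =
      ((1 ::ₘ (univ.erase 0).val.map fun i => 1 - lam i).map fun a => X - C a).prod := by
  have h := charpoly_add_vecMulVec (v := π) (a := 0) (show (1 - P) *ᵥ 1 = (0 : ℝ) • 1 by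
    rw [sub_mulVec, one_mulVec, hP.mulVec_one, sub_self, zero_smul])
  rw [hπ.dotProduct_one, C_0, sub_zero, zero_add, map_one,
    charpoly_one_sub_of_charpoly_eq_prod hchar, ← mul_prod_erase univ _ (mem_univ 0), hlam0, sub_self, C_0, sub_zero, mul_left_comm] at h
  rw [Multiset.map_cons, Multiset.prod_cons, mul_left_cancel₀ X_ne_zero h]
  simp [prod_eq_multiset_prod]

theorem zero_notMem_cons_map_one_sub (hlt : ∀ i, i ≠ 0 → lam i < 1) :
    (0 : ℝ) ∉ 1 ::ₘ (univ.erase 0).val.map fun i => 1 - lam i := by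
  simp only [Multiset.mem_cons, Multiset.mem_map, mem_val, mem_erase]
  rintro (h | ⟨i, ⟨hi, -⟩, h⟩)
  · exact zero_ne_one h
  · linarith [hlt i hi]

theorem isUnit_det_one_sub_add_vecMulVec (hP : RowStochastic P) (hπ : IsProbVec π)
    (hchar : P.charpoly = ∏ i, (X - C (lam i))) (hlam0 : lam 0 = 1)
    (hlt : ∀ i, i ≠ 0 → lam i < 1) : IsUnit (1 - P + vecMulVec 1 π).det := by
  rw [det_eq_prod_of_charpoly_eq_prod (charpoly_one_sub_add_vecMulVec hP hπ hchar hlam0)]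
  exact isUnit_iff_ne_zero.mpr (Multiset.prod_ne_zero (zero_notMem_cons_map_one_sub hlt))

theorem trace_fundamentalMatrix (hP : RowStochastic P) (hπ : IsProbVec π)
    (hchar : P.charpoly = ∏ i, (X - C (lam i))) (hlam0 : lam 0 = 1)
    (hlt : ∀ i, i ≠ 0 → lam i < 1) :
    (fundamentalMatrix P π).trace = 1 + ∑ i ∈ univ.erase 0, 1 / (1 - lam i) := by
  rw [fundamentalMatrix, trace_inv_of_charpoly_eq_prod
    (charpoly_one_sub_add_vecMulVec hP hπ hchar hlam0) (zero_notMem_cons_map_one_sub hlt)]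
  simp [sum_eq_multiset_sum]

end Eigenvalues

end MJ

open MJ Polynomial in
theorem stmt0_general {n : ℕ} (P Pt : Matrix (Fin (n+1)) (Fin (n+1)) ℝ)
    (piv pivt : Fin (n+1) → ℝ)
    (hP : RowStochastic P) (hPt : RowStochastic Pt)
    (hPe : Ergodic' P)
    (hpiv : IsStationary P piv) (hpivt : IsStationary Pt pivt)
    (lam : Fin (n+1) → ℝ)
    (hchar : P.charpoly = ∏ i, (X - C (lam i)))
    (hlam0 : lam 0 = 1)
    (hlt : ∀ i : Fin (n+1), i ≠ 0 → lam i < 1) :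
    l1 (fun i => piv i - pivt i) ≤
      (∑ i ∈ Finset.univ.erase (0 : Fin (n+1)), 1 / (1 - lam i)) * rowSumNorm (P - Pt) := by
  have hB := isUnit_det_one_sub_add_vecMulVec hP hpiv.1 hchar hlam0 hlt
  have hT : 0 ≤ ∑ i ∈ univ.erase 0, 1 / (1 - lam i) :=
    sum_nonneg fun i hi => (one_div_pos.mpr (sub_pos.mpr (hlt i (ne_of_mem_erase hi)))).le
  calc l1 (fun i => piv i - pivt i)
        = ∑ j, |((pivt ᵥ* (P - Pt)) ᵥ* fundamentalMatrix P piv) j| := by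
        rw [← sub_eq_vecMul_fundamentalMatrix hpiv hpivt hB]; rfl
    _ ≤ ((fundamentalMatrix P piv).trace - 1) * ∑ j, |(pivt ᵥ* (P - Pt)) j| :=
        sum_abs_vecMul_le_of_sum_eq_zero (hP.sum_vecMul_sub_eq_zero hPt pivt)
          (fundamentalMatrix_mulVec_one hP hpiv.1 hB) (fundamentalMatrix_le_diag hP hpiv hPe hB)
    _ ≤ (∑ i ∈ univ.erase 0, 1 / (1 - lam i)) * rowSumNorm (P - Pt) := by
        rw [trace_fundamentalMatrix hP hpiv.1 hchar hlam0 hlt, add_sub_cancel_left]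
        exact mul_le_mul_of_nonneg_left (sum_abs_vecMul_le_rowSumNorm hpivt.1 _) hT

open MJ Polynomial in
/-- stationary distribution perturbation bound via eigenvalues. -/
theorem stmt0 {n : ℕ} (P Pt : Matrix (Fin (n+1)) (Fin (n+1)) ℝ)
    (piv pivt : Fin (n+1) → ℝ)
    (hP : RowStochastic P) (hPt : RowStochastic Pt)
    (hPe : Ergodic' P) (hPte : Ergodic' Pt)
    (hpiv : IsStationary P piv) (hpivt : IsStationary Pt pivt)
    (lam : Fin (n+1) → ℝ)
    (hchar : P.charpoly = ∏ i, (X - C (lam i)))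
    (hlam0 : lam 0 = 1)
    (hanti : Antitone lam)
    (hlt : ∀ i : Fin (n+1), i ≠ 0 → lam i < 1) :
    l1 (fun i => piv i - pivt i) ≤
      (∑ i ∈ Finset.univ.erase (0 : Fin (n+1)), 1 / (1 - lam i)) * rowSumNorm (P - Pt) :=
  stmt0_general P Pt piv pivt hP hPt hPe hpiv hpivt lam hchar hlam0 hlt
end
end

section
/- Let A, Â ∈ ℝ^{m×n} and 1 ≤ r < min(m,n). Let U_r, V_r (respectively Û_r, V̂_r) be matrices whose orthonormal columns are the first r left and right singular vectors of A (respectively Â), and let σ_r(A) ≥ σ_{r+1}(A) denote the r-th and (r+1)-th largest singular values of A. Then (σ_r(A) − σ_{r+1}(A)) · max{‖sin Θ(V_r, V̂_r)‖, ‖sin Θ(U_r, Û_r)‖} ≤ 2 ‖A − Â‖, where ‖·‖ is the spectral norm; equivalently, whenever σ_r(A) − σ_{r+1}(A) > 0, max{‖sin Θ(V_r, V̂_r)‖, ‖sin Θ(U_r, Û_r)‖} ≤ 2‖A − Â‖ / (σ_r(A) − σ_{r+1}(A)). -/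
open scoped BigOperators
open Matrix

noncomputable section

/-! Wedin's argument, with Q = 1 - U_r U_rᵀ, P = 1 - V_r V_rᵀ and δ = ‖A - Â‖. Since
Q A = A P and ‖A P‖ ≤ σ_{r+1}(A), the identities
  Q Û_r Σ̂_r = Q (Â - A) V̂_r + (A P) (P V̂_r),   P V̂_r Σ̂_r = P (Â - A)ᵀ Û_r + (A P)ᵀ (Q Û_r)
give σ̂_r ‖Q Û_r‖ ≤ δ + σ_{r+1} ‖P V̂_r‖ and the same with the roles of Q Û_r and P V̂_r
exchanged, hence (σ̂_r - σ_{r+1}) ‖sin Θ(U_r, Û_r)‖ ≤ δ. Weyl's inequality σ_r ≤ σ̂_r + δ,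
proved through the Courant–Fischer characterisation behind `singVal`, together with
‖sin Θ‖ ≤ 1 replaces σ̂_r by σ_r at the cost of a second δ. The right singular vectors are
handled by applying all this to Aᵀ. -/

namespace MJ

open scoped Matrix.Norms.L2Operator

section Norms

variable {k m n : ℕ}

lemma l2_eq_norm (v : Fin k → ℝ) : l2 v = ‖WithLp.toLp 2 v‖ := by
  simp [l2, EuclideanSpace.norm_eq, Real.norm_eq_abs, sq_abs]

lemma l2_nonneg (v : Fin k → ℝ) : 0 ≤ l2 v := Real.sqrt_nonneg _

lemma l2_pos {v : Fin k → ℝ} (hv : v ≠ 0) : 0 < l2 v := by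
  rw [l2_eq_norm]
  exact norm_pos_iff.mpr (by simpa using hv)

lemma l2_sq (v : Fin k → ℝ) : l2 v ^ 2 = ∑ j, v j ^ 2 :=
  Real.sq_sqrt (by positivity)

lemma l2_sq_eq_dotProduct (v : Fin k → ℝ) : l2 v ^ 2 = v ⬝ᵥ v := by
  rw [l2_sq]
  simp [dotProduct, sq]

lemma l2_add_le (u v : Fin k → ℝ) : l2 (u + v) ≤ l2 u + l2 v := by
  simpa only [l2_eq_norm, WithLp.toLp_add] using norm_add_le _ _

lemma l2_mulVec_le (A : Matrix (Fin m) (Fin n) ℝ) (x : Fin n → ℝ) :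
    l2 (A *ᵥ x) ≤ ‖A‖ * l2 x := by
  simpa [l2_eq_norm] using A.l2_opNorm_mulVec (WithLp.toLp 2 x)

lemma spec_eq_norm (A : Matrix (Fin m) (Fin n) ℝ) : spec A = ‖A‖ := by
  rw [spec, l2_opNorm_def, ← ContinuousLinearMap.sSup_unitClosedBall_eq_norm]
  congr 1
  ext c
  simp only [Set.mem_ofPred_eq, Set.mem_image, Metric.mem_closedBall, dist_zero_right, l2_eq_norm]
  constructor
  · rintro ⟨x, hx, rfl⟩
    exact ⟨WithLp.toLp 2 x, hx, by simp⟩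
  · rintro ⟨x, hx, rfl⟩
    exact ⟨x.ofLp, by simpa using hx, rfl⟩

lemma norm_le_of_l2_mulVec_le {A : Matrix (Fin m) (Fin n) ℝ} {c : ℝ} (hc : 0 ≤ c)
    (h : ∀ x, l2 (A *ᵥ x) ≤ c * l2 x) : ‖A‖ ≤ c := by
  rw [← spec_eq_norm]
  exact Real.sSup_le (fun _ ⟨x, hx, e⟩ => e ▸ (h x).trans (mul_le_of_le_one_right hc hx)) hc

lemma norm_transpose (A : Matrix (Fin m) (Fin n) ℝ) : ‖Aᵀ‖ = ‖A‖ := by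
  simpa using A.l2_opNorm_conjTranspose

lemma spec_transpose (A : Matrix (Fin m) (Fin n) ℝ) : spec Aᵀ = spec A := by
  rw [spec_eq_norm, spec_eq_norm, norm_transpose]

lemma norm_le_one_of_transpose_mul_self {E : Matrix (Fin m) (Fin n) ℝ} (hE : Eᵀ * E = 1) :
    ‖E‖ ≤ 1 := by
  have h := E.l2_opNorm_conjTranspose_mul_self
  rw [conjTranspose_eq_transpose_of_trivial, hE, ← diagonal_one, l2_opNorm_diagonal] at h
  have h1 : ‖fun _ : Fin n => (1 : ℝ)‖ ≤ 1 :=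
    (pi_norm_le_iff_of_nonneg zero_le_one).mpr fun _ => by simp
  nlinarith [norm_nonneg E]

lemma isIdempotentElem_one_sub_mul_transpose {E : Matrix (Fin m) (Fin n) ℝ}
    (hE : Eᵀ * E = 1) : IsIdempotentElem (1 - E * Eᵀ) := by
  have : E * Eᵀ * (E * Eᵀ) = E * Eᵀ := by
    rw [Matrix.mul_assoc, ← Matrix.mul_assoc Eᵀ, hE, Matrix.one_mul]
  rw [IsIdempotentElem, Matrix.sub_mul, Matrix.mul_sub, Matrix.mul_sub, this]
  simp

lemma transpose_mul_one_sub_mul_transpose {E : Matrix (Fin m) (Fin n) ℝ} (hE : Eᵀ * E = 1) :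
    Eᵀ * (1 - E * Eᵀ) = 0 := by
  rw [Matrix.mul_sub, Matrix.mul_one, ← Matrix.mul_assoc, hE, Matrix.one_mul, sub_self]

lemma transpose_one_sub_mul_transpose (E : Matrix (Fin m) (Fin n) ℝ) :
    (1 - E * Eᵀ)ᵀ = 1 - E * Eᵀ := by
  simp [transpose_sub, transpose_mul]

lemma norm_one_sub_mul_transpose_le_one {E : Matrix (Fin m) (Fin n) ℝ} (hE : Eᵀ * E = 1) :
    ‖1 - E * Eᵀ‖ ≤ 1 := by
  have h := (1 - E * Eᵀ).l2_opNorm_conjTranspose_mul_self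
  rw [conjTranspose_eq_transpose_of_trivial, transpose_one_sub_mul_transpose,
    (isIdempotentElem_one_sub_mul_transpose hE).eq] at h
  nlinarith [norm_nonneg (1 - E * Eᵀ)]

lemma le_norm_mul_diagonal (X : Matrix (Fin m) (Fin n) ℝ) {d : Fin n → ℝ} {σ : ℝ}
    (hd : ∀ i, σ ≤ d i) : σ * ‖X‖ ≤ ‖X * diagonal d‖ := by
  rcases le_or_gt σ 0 with hσ | hσ
  · exact (mul_nonpos_of_nonpos_of_nonneg hσ (norm_nonneg X)).trans (norm_nonneg _)
  have hd0 : ∀ i, d i ≠ 0 := fun i => (hσ.trans_le (hd i)).ne'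
  have hX : X = X * diagonal d * diagonal d⁻¹ := by
    rw [Matrix.mul_assoc, diagonal_mul_diagonal]
    simp [mul_inv_cancel₀ (hd0 _)]
  have hinv : ‖d⁻¹‖ ≤ σ⁻¹ := (pi_norm_le_iff_of_nonneg (inv_nonneg.mpr hσ.le)).mpr fun i => by
    rw [Pi.inv_apply, norm_inv, Real.norm_of_nonneg (hσ.le.trans (hd i))]
    exact inv_anti₀ hσ (hd i)
  calc σ * ‖X‖ ≤ σ * (‖X * diagonal d‖ * σ⁻¹) := by
        gcongr
        calc ‖X‖ = ‖X * diagonal d * diagonal d⁻¹‖ := by rw [← hX]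
          _ ≤ ‖X * diagonal d‖ * ‖d⁻¹‖ := by
            simpa using l2_opNorm_mul (X * diagonal d) (diagonal d⁻¹)
          _ ≤ ‖X * diagonal d‖ * σ⁻¹ := by gcongr
    _ = ‖X * diagonal d‖ := by field_simp

lemma norm_mul_mul_le_of_norm_le_one {l : ℕ} {X : Matrix (Fin k) (Fin m) ℝ}
    {Y : Matrix (Fin n) (Fin l) ℝ} (hX : ‖X‖ ≤ 1) (hY : ‖Y‖ ≤ 1) (B : Matrix (Fin m) (Fin n) ℝ) :
    ‖X * B * Y‖ ≤ ‖B‖ :=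
  calc ‖X * B * Y‖ ≤ ‖X‖ * ‖B‖ * ‖Y‖ :=
        (l2_opNorm_mul _ _).trans (by gcongr; exact l2_opNorm_mul _ _)
    _ ≤ 1 * ‖B‖ * 1 := by gcongr
    _ = ‖B‖ := by ring

lemma norm_sinThetaMat_le_one {E F : Matrix (Fin m) (Fin n) ℝ} (hE : Eᵀ * E = 1)
    (hF : Fᵀ * F = 1) : ‖sinThetaMat E F‖ ≤ 1 := by
  rw [sinThetaMat, ← Matrix.mul_assoc]
  refine (norm_mul_mul_le_of_norm_le_one (norm_one_sub_mul_transpose_le_one hE) ?_ F).trans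
    (norm_le_one_of_transpose_mul_self hF)
  rw [norm_transpose]
  exact norm_le_one_of_transpose_mul_self hF

lemma transpose_mul_submatrix_eq_one {U : Matrix (Fin m) (Fin m) ℝ} (hU : Uᵀ * U = 1)
    {e : Fin n → Fin m} (he : Function.Injective e) :
    (U.submatrix id e)ᵀ * U.submatrix id e = 1 := by
  rw [transpose_submatrix, ← submatrix_mul _ _ _ _ _ Function.bijective_id, hU, submatrix_one e he]

end Norms

lemma sub_mul_le_of_le_add_mul {s τ δ a b : ℝ} (hτ : 0 ≤ τ) (hδ : 0 ≤ δ) (hb : 0 ≤ b)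
    (hsb : s * b ≤ δ + τ * a) (hsa : s * a ≤ δ + τ * b) : (s - τ) * b ≤ δ := by
  rcases le_total s τ with hs | hs
  · nlinarith [mul_nonpos_of_nonpos_of_nonneg (sub_nonpos.mpr hs) hb]
  rcases le_total a b with hab | hab <;> nlinarith

section Wedin

variable {m n r : ℕ} {A Ah : Matrix (Fin m) (Fin n) ℝ}
  {Ur Uhr : Matrix (Fin m) (Fin r) ℝ} {Vr Vhr : Matrix (Fin n) (Fin r) ℝ}

lemma one_sub_mul_transpose_mul_eq {s : Fin r → ℝ} (hAV : A * Vr = Ur * diagonal s)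
    (hAU : Aᵀ * Ur = Vr * diagonal s) : (1 - Ur * Urᵀ) * A = A * (1 - Vr * Vrᵀ) := by
  have h : Ur * Urᵀ * A = A * (Vr * Vrᵀ) := by
    rw [← Matrix.mul_assoc, hAV, Matrix.mul_assoc, ← transpose_transpose A, ← transpose_mul, hAU]
    simp [transpose_mul, Matrix.mul_assoc]
  rw [Matrix.sub_mul, Matrix.mul_sub, h, Matrix.one_mul, Matrix.mul_one]

theorem sub_mul_norm_sinThetaMat_le {s sh : Fin r → ℝ} {σh τ : ℝ}
    (hUr : Urᵀ * Ur = 1) (hVr : Vrᵀ * Vr = 1) (hUhr : Uhrᵀ * Uhr = 1) (hVhr : Vhrᵀ * Vhr = 1)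
    (hAV : A * Vr = Ur * diagonal s) (hAU : Aᵀ * Ur = Vr * diagonal s)
    (hAhV : Ah * Vhr = Uhr * diagonal sh) (hAhU : Ahᵀ * Uhr = Vhr * diagonal sh)
    (hsh : ∀ i, σh ≤ sh i) (hτ : ‖A * (1 - Vr * Vrᵀ)‖ ≤ τ) :
    (σh - τ) * ‖sinThetaMat Ur Uhr‖ ≤ ‖A - Ah‖ := by
  set Q := 1 - Ur * Urᵀ
  set P := 1 - Vr * Vrᵀ
  set A₂ := A * P
  have hQA : Q * A = A₂ := one_sub_mul_transpose_mul_eq hAV hAU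
  have hA₂P : A₂ * P = A₂ := by
    rw [Matrix.mul_assoc, (isIdempotentElem_one_sub_mul_transpose hVr).eq]
  have hA₂Q : A₂ᵀ * Q = A₂ᵀ := by
    rw [← hQA, transpose_mul, Matrix.mul_assoc, transpose_one_sub_mul_transpose,
      (isIdempotentElem_one_sub_mul_transpose hUr).eq]
  have hτ0 : 0 ≤ τ := (norm_nonneg _).trans hτ
  have hQ : ‖Q‖ ≤ 1 := norm_one_sub_mul_transpose_le_one hUr
  have hP : ‖P‖ ≤ 1 := norm_one_sub_mul_transpose_le_one hVr
  have hPA : P * Aᵀ = A₂ᵀ := by rw [transpose_mul, transpose_one_sub_mul_transpose]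
  have hsin : sinThetaMat Ur Uhr = Q * Uhr * Uhrᵀ := by rw [sinThetaMat, Matrix.mul_assoc]
  clear_value A₂ Q P
  have eU : Q * Uhr * diagonal sh = Q * (Ah - A) * Vhr + A₂ * (P * Vhr) := by
    rw [← Matrix.mul_assoc, hA₂P, ← hQA, Matrix.mul_sub, Matrix.sub_mul, Matrix.mul_assoc Q Ah,
      hAhV, sub_add_cancel, Matrix.mul_assoc]
  have eV : P * Vhr * diagonal sh = P * (Ah - A)ᵀ * Uhr + A₂ᵀ * (Q * Uhr) := by
    rw [← Matrix.mul_assoc, hA₂Q, ← hPA, transpose_sub, Matrix.mul_sub, Matrix.sub_mul,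
      Matrix.mul_assoc P Ahᵀ, hAhU, sub_add_cancel, Matrix.mul_assoc]
  have hUhr1 : ‖Uhr‖ ≤ 1 := norm_le_one_of_transpose_mul_self hUhr
  have hVhr1 : ‖Vhr‖ ≤ 1 := norm_le_one_of_transpose_mul_self hVhr
  have hU : σh * ‖Q * Uhr‖ ≤ ‖A - Ah‖ + τ * ‖P * Vhr‖ :=
    calc σh * ‖Q * Uhr‖ ≤ ‖Q * Uhr * diagonal sh‖ := le_norm_mul_diagonal _ hsh
      _ ≤ ‖Q * (Ah - A) * Vhr‖ + ‖A₂ * (P * Vhr)‖ := eU ▸ norm_add_le _ _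
      _ ≤ ‖A - Ah‖ + τ * ‖P * Vhr‖ := by
        gcongr
        · exact norm_sub_rev Ah A ▸ norm_mul_mul_le_of_norm_le_one hQ hVhr1 _
        · exact (l2_opNorm_mul _ _).trans (by gcongr)
  have hV : σh * ‖P * Vhr‖ ≤ ‖A - Ah‖ + τ * ‖Q * Uhr‖ :=
    calc σh * ‖P * Vhr‖ ≤ ‖P * Vhr * diagonal sh‖ := le_norm_mul_diagonal _ hsh
      _ ≤ ‖P * (Ah - A)ᵀ * Uhr‖ + ‖A₂ᵀ * (Q * Uhr)‖ := eV ▸ norm_add_le _ _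
      _ ≤ ‖A - Ah‖ + τ * ‖Q * Uhr‖ := by
        gcongr
        · exact (norm_mul_mul_le_of_norm_le_one hP hUhr1 _).trans
            (by rw [norm_transpose, norm_sub_rev])
        · exact (l2_opNorm_mul _ _).trans (by rw [norm_transpose]; gcongr)
  have hQU : (σh - τ) * ‖Q * Uhr‖ ≤ ‖A - Ah‖ :=
    sub_mul_le_of_le_add_mul hτ0 (norm_nonneg _) (norm_nonneg _) hU hV
  have hsinQU : ‖sinThetaMat Ur Uhr‖ ≤ ‖Q * Uhr‖ :=
    calc ‖sinThetaMat Ur Uhr‖ ≤ ‖Q * Uhr‖ * ‖Uhrᵀ‖ := hsin ▸ l2_opNorm_mul _ _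
      _ ≤ ‖Q * Uhr‖ := mul_le_of_le_one_right (norm_nonneg _) (by rwa [norm_transpose])
  rcases le_total σh τ with h | h
  · exact (mul_nonpos_of_nonpos_of_nonneg (sub_nonpos.mpr h) (norm_nonneg _)).trans
      (norm_nonneg _)
  · exact (mul_le_mul_of_nonneg_left hsinQU (sub_nonneg.mpr h)).trans hQU

end Wedin

section SVD

variable {m n : ℕ}

lemma l2_mulVec_sq_eq_dotProduct (M : Matrix (Fin m) (Fin n) ℝ) (x : Fin n → ℝ) :
    l2 (M *ᵥ x) ^ 2 = x ⬝ᵥ ((Mᵀ * M) *ᵥ x) := by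
  rw [l2_sq_eq_dotProduct, ← mulVec_mulVec, dotProduct_mulVec, ← mulVec_transpose, dotProduct_comm]

lemma l2_mulVec_of_transpose_mul_self {M : Matrix (Fin m) (Fin n) ℝ} (hM : Mᵀ * M = 1)
    (x : Fin n → ℝ) : l2 (M *ᵥ x) = l2 x := by
  rw [← sq_eq_sq₀ (l2_nonneg _) (l2_nonneg _), l2_mulVec_sq_eq_dotProduct, hM, one_mulVec,
    l2_sq_eq_dotProduct]

lemma transpose_mul_self_eq_diagonal {S : Matrix (Fin m) (Fin n) ℝ}
    (hS : ∀ (i : Fin m) (t : Fin n), (i : ℕ) ≠ t → S i t = 0) :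
    Sᵀ * S = diagonal fun t => ∑ i, S i t ^ 2 := by
  ext t t'
  rcases eq_or_ne t t' with rfl | htt'
  · simp [mul_apply, sq]
  · rw [diagonal_apply_ne _ htt', mul_apply]
    refine Finset.sum_eq_zero fun i _ => ?_
    by_cases hit : (i : ℕ) = t
    · rw [transpose_apply, hS i t' (hit ▸ Fin.val_ne_of_ne htt'), mul_zero]
    · rw [transpose_apply, hS i t hit, zero_mul]

lemma sum_sq_col_eq {S : Matrix (Fin m) (Fin n) ℝ}
    (hS : ∀ (i : Fin m) (t : Fin n), (i : ℕ) ≠ t → S i t = 0) (t : Fin n) :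
    ∑ i, S i t ^ 2 = if h : (t : ℕ) < m then S ⟨t, h⟩ t ^ 2 else 0 := by
  split_ifs with h
  · refine Finset.sum_eq_single _ (fun i _ hi => ?_) (by simp)
    rw [hS i t fun h' => hi (Fin.ext h'), sq, zero_mul]
  · exact Finset.sum_eq_zero fun i _ => by rw [hS i t (by omega), sq, zero_mul]

variable {A : Matrix (Fin m) (Fin n) ℝ} {U : Matrix (Fin m) (Fin m) ℝ}
  {S : Matrix (Fin m) (Fin n) ℝ} {V : Matrix (Fin n) (Fin n) ℝ}

lemma IsSVD.transpose (h : IsSVD A U S V) : IsSVD Aᵀ V Sᵀ U := by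
  obtain ⟨hU, hV, hA, hd, hnn, hdesc⟩ := h
  refine ⟨hV, hU, ?_, fun i j hij => hd j i (Ne.symm hij), fun i j => hnn j i,
    fun a b ham hak hbm hbk => hdesc a b hak ham hbk hbm⟩
  rw [hA, transpose_mul, transpose_mul, transpose_transpose, Matrix.mul_assoc]

lemma IsSVD.mul_submatrix (h : IsSVD A U S V) {r : ℕ} (hrm : r ≤ m) (hrn : r ≤ n) :
    A * V.submatrix id (Fin.castLE hrn) = U.submatrix id (Fin.castLE hrm) *
      diagonal fun c => S (Fin.castLE hrm c) (Fin.castLE hrn c) := by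
  obtain ⟨-, hV, hA, hd, -, -⟩ := h
  have hAV : A * V = U * S := by rw [hA, Matrix.mul_assoc, hV, Matrix.mul_one]
  ext i c
  rw [mul_diagonal, ← submatrix_id_id A, ← submatrix_mul _ _ _ _ _ Function.bijective_id, hAV,
    submatrix_apply, mul_apply]
  refine Finset.sum_eq_single _ (fun k _ hk => ?_) (by simp)
  rw [hd k _ fun h' => hk (Fin.ext h'), mul_zero]

lemma IsSVD.l2_transpose_mulVec (h : IsSVD A U S V) (x : Fin n → ℝ) : l2 (Vᵀ *ᵥ x) = l2 x :=
  l2_mulVec_of_transpose_mul_self (by rw [transpose_transpose]; exact mul_eq_one_comm.mp h.2.1) x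

lemma IsSVD.l2_mulVec_sq (h : IsSVD A U S V) (x : Fin n → ℝ) :
    l2 (A *ᵥ x) ^ 2 = ∑ t, (∑ i, S i t ^ 2) * (Vᵀ *ᵥ x) t ^ 2 := by
  obtain ⟨hU, -, hA, hd, -, -⟩ := h
  rw [hA, ← mulVec_mulVec, ← mulVec_mulVec, l2_mulVec_of_transpose_mul_self hU,
    l2_mulVec_sq_eq_dotProduct, transpose_mul_self_eq_diagonal hd]
  simp only [dotProduct, mulVec_diagonal]
  exact Finset.sum_congr rfl fun t _ => by ring

lemma bddAbove_singVal_set (A : Matrix (Fin m) (Fin n) ℝ) {j : ℕ} (hj : j ≠ 0) :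
    BddAbove {c : ℝ | ∃ W : Submodule ℝ (Fin n → ℝ), Module.finrank ℝ W = j ∧
      ∀ x ∈ W, c * l2 x ≤ l2 (A *ᵥ x)} := by
  refine ⟨‖A‖, fun c ⟨W, hW, hc⟩ => ?_⟩
  obtain ⟨x, hxW, hx0⟩ := Submodule.exists_mem_ne_zero_of_ne_bot (p := W) <| by
    rintro rfl
    exact hj (by simpa using hW.symm)
  exact le_of_mul_le_mul_right ((hc x hxW).trans (l2_mulVec_le A x)) (l2_pos hx0)

-- `S ⟨p, _⟩ ⟨p, _⟩` is the singular value that `singVal` numbers `p + 1`.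
variable {p : ℕ} (hpm : p < m) (hpn : p < n)
include hpm hpn

lemma IsSVD.sum_sq_col_le (h : IsSVD A U S V) {t : Fin n} (ht : p ≤ t) :
    ∑ i, S i t ^ 2 ≤ S ⟨p, hpm⟩ ⟨p, hpn⟩ ^ 2 := by
  obtain ⟨-, -, -, hd, hnn, hdesc⟩ := h
  rw [sum_sq_col_eq hd]
  split_ifs with htm
  · exact pow_le_pow_left₀ (hnn _ _) (hdesc p t hpm hpn htm t.isLt ht) 2
  · positivity

lemma IsSVD.sq_le_sum_sq_col (h : IsSVD A U S V) {t : Fin n} (ht : t ≤ p) :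
    S ⟨p, hpm⟩ ⟨p, hpn⟩ ^ 2 ≤ ∑ i, S i t ^ 2 := by
  obtain ⟨-, -, -, hd, hnn, hdesc⟩ := h
  rw [sum_sq_col_eq hd, dif_pos (by omega)]
  exact pow_le_pow_left₀ (hnn _ _) (hdesc t p (by omega) t.isLt hpm hpn ht) 2

lemma IsSVD.l2_mulVec_le_of_forall_lt (h : IsSVD A U S V) {x : Fin n → ℝ}
    (hx : ∀ t : Fin n, (t : ℕ) < p → (Vᵀ *ᵥ x) t = 0) :
    l2 (A *ᵥ x) ≤ S ⟨p, hpm⟩ ⟨p, hpn⟩ * l2 x := by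
  have hσ : 0 ≤ S ⟨p, hpm⟩ ⟨p, hpn⟩ := h.2.2.2.2.1 _ _
  rw [← pow_le_pow_iff_left₀ (l2_nonneg _) (by positivity [l2_nonneg x]) two_ne_zero, mul_pow,
    h.l2_mulVec_sq, ← h.l2_transpose_mulVec, l2_sq, Finset.mul_sum]
  refine Finset.sum_le_sum fun t _ => ?_
  rcases lt_or_ge (t : ℕ) p with ht | ht
  · simp [hx t ht]
  · exact mul_le_mul_of_nonneg_right (h.sum_sq_col_le hpm hpn ht) (sq_nonneg _)

lemma IsSVD.le_l2_mulVec_of_forall_gt (h : IsSVD A U S V) {x : Fin n → ℝ}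
    (hx : ∀ t : Fin n, p < (t : ℕ) → (Vᵀ *ᵥ x) t = 0) :
    S ⟨p, hpm⟩ ⟨p, hpn⟩ * l2 x ≤ l2 (A *ᵥ x) := by
  have hσ : 0 ≤ S ⟨p, hpm⟩ ⟨p, hpn⟩ := h.2.2.2.2.1 _ _
  rw [← pow_le_pow_iff_left₀ (by positivity [l2_nonneg x]) (l2_nonneg _) two_ne_zero, mul_pow,
    h.l2_mulVec_sq, ← h.l2_transpose_mulVec, l2_sq, Finset.mul_sum]
  refine Finset.sum_le_sum fun t _ => ?_
  rcases le_or_gt (t : ℕ) p with ht | ht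
  · exact mul_le_mul_of_nonneg_right (h.sq_le_sum_sq_col hpm hpn ht) (sq_nonneg _)
  · simp [hx t ht]

lemma IsSVD.le_singVal (h : IsSVD A U S V) : S ⟨p, hpm⟩ ⟨p, hpn⟩ ≤ singVal A (p + 1) := by
  set Vp := V.submatrix id (Fin.castLE (hpn : p + 1 ≤ n))
  have hVp : Vpᵀ * Vp = 1 := transpose_mul_submatrix_eq_one h.2.1 (Fin.castLE_injective _)
  have hinj : Function.Injective (toLin' Vp) := fun a b hab => by
    simpa [mulVec_mulVec, hVp] using congrArg (Vpᵀ *ᵥ ·) hab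
  have hVVp : Vᵀ * Vp = (1 : Matrix (Fin n) (Fin n) ℝ).submatrix id (Fin.castLE hpn) := by
    rw [← h.2.1, submatrix_mul _ _ _ _ _ Function.bijective_id, submatrix_id_id]
  refine le_csSup (bddAbove_singVal_set A p.succ_ne_zero) ⟨LinearMap.range (toLin' Vp), ?_, ?_⟩
  · rw [LinearMap.finrank_range_of_inj hinj, Module.finrank_fin_fun]
  · rintro _ ⟨a, rfl⟩
    refine h.le_l2_mulVec_of_forall_gt hpm hpn fun t ht => ?_
    rw [toLin'_apply, mulVec_mulVec, hVVp, mulVec, dotProduct]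
    refine Finset.sum_eq_zero fun c _ => ?_
    have htc : t ≠ Fin.castLE hpn c := fun htc => by
      have := congrArg Fin.val htc
      simp only [Fin.val_castLE] at this
      omega
    rw [submatrix_apply, id, one_apply_ne htc, zero_mul]

lemma IsSVD.le_of_forall_mem_mul_l2_le (h : IsSVD A U S V) {W : Submodule ℝ (Fin n → ℝ)}
    (hW : Module.finrank ℝ W = p + 1) {c : ℝ} (hc : ∀ x ∈ W, c * l2 x ≤ l2 (A *ᵥ x)) :
    c ≤ S ⟨p, hpm⟩ ⟨p, hpn⟩ := by
  set T := toLin' ((Vᵀ).submatrix (Fin.castLE hpn.le) id)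
  have hK : n - p ≤ Module.finrank ℝ (LinearMap.ker T) := by
    have := T.finrank_range_add_finrank_ker
    have := Submodule.finrank_le (LinearMap.range T)
    simp only [Module.finrank_fin_fun] at *
    omega
  obtain ⟨x, hxW, hxK, hx0⟩ : ∃ x ∈ W, x ∈ LinearMap.ker T ∧ x ≠ 0 := by
    by_contra! hcon
    have := Submodule.finrank_add_finrank_le_of_disjoint
      (Submodule.disjoint_def.mpr fun x hxW hxK => hcon x hxW hxK)
    simp only [Module.finrank_fin_fun] at this
    omega
  have hAx := h.l2_mulVec_le_of_forall_lt hpm hpn (x := x) fun t ht => congrFun hxK ⟨t, ht⟩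
  exact le_of_mul_le_mul_right ((hc x hxW).trans hAx) (l2_pos hx0)

lemma IsSVD.singVal_le_add_norm_sub (h : IsSVD A U S V) (B : Matrix (Fin m) (Fin n) ℝ) :
    singVal B (p + 1) ≤ S ⟨p, hpm⟩ ⟨p, hpn⟩ + ‖B - A‖ := by
  refine Real.sSup_le (fun c ⟨W, hW, hc⟩ => ?_) (add_nonneg (h.2.2.2.2.1 _ _) (norm_nonneg _))
  suffices c - ‖B - A‖ ≤ S ⟨p, hpm⟩ ⟨p, hpn⟩ by linarith
  refine h.le_of_forall_mem_mul_l2_le hpm hpn hW fun x hx => ?_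
  have hBx : l2 (B *ᵥ x) ≤ l2 (A *ᵥ x) + ‖B - A‖ * l2 x :=
    calc l2 (B *ᵥ x) = l2 (A *ᵥ x + (B - A) *ᵥ x) := by rw [sub_mulVec, add_sub_cancel]
      _ ≤ _ := (l2_add_le _ _).trans (by gcongr; exact l2_mulVec_le _ _)
  linarith [hc x hx]

lemma IsSVD.singVal_eq (h : IsSVD A U S V) : singVal A (p + 1) = S ⟨p, hpm⟩ ⟨p, hpn⟩ :=
  le_antisymm (by simpa using h.singVal_le_add_norm_sub hpm hpn A) (h.le_singVal hpm hpn)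

lemma IsSVD.singVal_transpose (h : IsSVD A U S V) : singVal Aᵀ (p + 1) = singVal A (p + 1) := by
  rw [h.transpose.singVal_eq hpn hpm, h.singVal_eq hpm hpn, transpose_apply]

lemma IsSVD.norm_mul_one_sub_le (h : IsSVD A U S V) :
    ‖A * (1 - V.submatrix id (Fin.castLE hpn.le) * (V.submatrix id (Fin.castLE hpn.le))ᵀ)‖ ≤
      S ⟨p, hpm⟩ ⟨p, hpn⟩ := by
  set Vp := V.submatrix id (Fin.castLE hpn.le)
  have hVp : Vpᵀ * Vp = 1 := transpose_mul_submatrix_eq_one h.2.1 (Fin.castLE_injective _)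
  refine norm_le_of_l2_mulVec_le (h.2.2.2.2.1 _ _) fun x => ?_
  rw [← mulVec_mulVec]
  refine (h.l2_mulVec_le_of_forall_lt hpm hpn fun t ht => ?_).trans ?_
  · have := congrFun (congrArg (· *ᵥ x) (transpose_mul_one_sub_mul_transpose hVp)) ⟨t, ht⟩
    rw [← mulVec_mulVec, zero_mulVec] at this
    exact this
  · gcongr
    · exact h.2.2.2.2.1 _ _
    · exact (l2_mulVec_le _ x).trans
        (mul_le_of_le_one_left (l2_nonneg x) (norm_one_sub_mul_transpose_le_one hVp))

end SVD

variable {m n p : ℕ} {A Ah : Matrix (Fin m) (Fin n) ℝ}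

theorem IsSVD.gap_mul_norm_sinThetaMat_le {U Uh : Matrix (Fin m) (Fin m) ℝ}
    {S Sh : Matrix (Fin m) (Fin n) ℝ} {V Vh : Matrix (Fin n) (Fin n) ℝ}
    (hA : IsSVD A U S V) (hAh : IsSVD Ah Uh Sh Vh) (hpm : p + 1 < m) (hpn : p + 1 < n) :
    (singVal A (p + 1) - singVal A (p + 1 + 1)) *
      ‖sinThetaMat (U.submatrix id (Fin.castLE hpm.le)) (Uh.submatrix id (Fin.castLE hpm.le))‖
      ≤ 2 * ‖A - Ah‖ := by
  have hUr := transpose_mul_submatrix_eq_one hA.1 (Fin.castLE_injective hpm.le)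
  have hUhr := transpose_mul_submatrix_eq_one hAh.1 (Fin.castLE_injective hpm.le)
  set t := ‖sinThetaMat (U.submatrix id (Fin.castLE hpm.le)) (Uh.submatrix id (Fin.castLE hpm.le))‖
  set δ := ‖A - Ah‖
  set σh := Sh ⟨p, by omega⟩ ⟨p, by omega⟩
  set τ := S ⟨p + 1, hpm⟩ ⟨p + 1, hpn⟩
  have hwedin : (σh - τ) * t ≤ δ :=
    sub_mul_norm_sinThetaMat_le hUr
      (transpose_mul_submatrix_eq_one hA.2.1 (Fin.castLE_injective _)) hUhr
      (transpose_mul_submatrix_eq_one hAh.2.1 (Fin.castLE_injective _))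
      (hA.mul_submatrix hpm.le hpn.le) (hA.transpose.mul_submatrix hpn.le hpm.le)
      (hAh.mul_submatrix hpm.le hpn.le) (hAh.transpose.mul_submatrix hpn.le hpm.le)
      (fun c => hAh.2.2.2.2.2 c p (by omega) (by omega) (by omega) (by omega) (by omega))
      (hA.norm_mul_one_sub_le hpm hpn)
  have hweyl := hAh.singVal_le_add_norm_sub (p := p) (by omega) (by omega) A
  have hnext := hA.le_singVal hpm hpn
  have ht1 : t ≤ 1 := norm_sinThetaMat_le_one hUr hUhr
  calc (singVal A (p + 1) - singVal A (p + 1 + 1)) * t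
      ≤ (σh - τ + δ) * t :=
        mul_le_mul_of_nonneg_right (by linarith) (norm_nonneg _)
    _ = (σh - τ) * t + δ * t := by ring
    _ ≤ δ + δ * 1 := add_le_add hwedin (by gcongr)
    _ = 2 * δ := by ring

theorem IsLeftSingTrunc.gap_mul_spec_sinThetaMat_le {Ur Uhr : Matrix (Fin m) (Fin (p + 1)) ℝ}
    (hUr : IsLeftSingTrunc A (p + 1) Ur) (hUhr : IsLeftSingTrunc Ah (p + 1) Uhr)
    (hpm : p + 1 < m) (hpn : p + 1 < n) :
    (singVal A (p + 1) - singVal A (p + 1 + 1)) * spec (sinThetaMat Ur Uhr) ≤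
      2 * spec (A - Ah) := by
  obtain ⟨U, S, V, hA, _, hU⟩ := hUr
  obtain ⟨Uh, Sh, Vh, hAh, _, hUh⟩ := hUhr
  obtain rfl : Ur = U.submatrix id (Fin.castLE hpm.le) := Matrix.ext hU
  obtain rfl : Uhr = Uh.submatrix id (Fin.castLE hpm.le) := Matrix.ext hUh
  rw [spec_eq_norm, spec_eq_norm]
  exact hA.gap_mul_norm_sinThetaMat_le hAh hpm hpn

end MJ

open MJ in
/-- combination of Wedin's perturbation theorem and Weyl's bound. -/
theorem stmt3 {m n r : ℕ} (hr1 : 1 ≤ r) (hrm : r < m) (hrn : r < n)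
    (A Ah : Matrix (Fin m) (Fin n) ℝ)
    (Ur Uhr : Matrix (Fin m) (Fin r) ℝ) (Vr Vhr : Matrix (Fin n) (Fin r) ℝ)
    (hUr : IsLeftSingTrunc A r Ur) (hVr : IsRightSingTrunc A r Vr)
    (hUhr : IsLeftSingTrunc Ah r Uhr) (hVhr : IsRightSingTrunc Ah r Vhr) :
    (singVal A r - singVal A (r+1)) *
      max (spec (sinThetaMat Vr Vhr)) (spec (sinThetaMat Ur Uhr))
      ≤ 2 * spec (A - Ah) := by
  obtain ⟨p, rfl⟩ := Nat.exists_eq_add_of_le' hr1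
  have hU := hUr.gap_mul_spec_sinThetaMat_le hUhr hrm hrn
  have hV := IsLeftSingTrunc.gap_mul_spec_sinThetaMat_le hVr hVhr hrn hrm
  obtain ⟨U, S, V, hA, -⟩ := hUr
  rw [hA.singVal_transpose (by omega) (by omega), hA.singVal_transpose hrm hrn, ← transpose_sub,
    spec_transpose] at hV
  rcases max_choice (spec (sinThetaMat Vr Vhr)) (spec (sinThetaMat Ur Uhr)) with h | h <;>
    rw [h] <;> assumption
end
end

section
/- Let U_1, U_2 ∈ ℝ^{n×r} with n ≥ r and U_1^T U_1 = U_2^T U_2 = I. Then there exists an orthogonal matrix O ∈ ℝ^{r×r} (i.e., O^T O = I) such that ‖U_1 − U_2 O‖_F^2 ≤ 2 ‖(I − U_1 U_1^T) U_2 U_2^T‖_F^2; that is, min over O in the orthogonal group O(r) of ‖U_1 − U_2 O‖_F^2 is at most 2 ‖sin Θ(U_1, U_2)‖_F^2. -/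
open scoped BigOperators
open Matrix

noncomputable section

/-!
Write `H = U₂ᵀU₁`. For orthogonal `O`, `‖U₁ - U₂O‖²_F = 2r - 2 tr(OᵀH)`, while
`‖(I - U₁U₁ᵀ)U₂U₂ᵀ‖²_F = r - tr(HᵀH)`. Taking `O = BVᵀ` from a singular value decomposition
`H = B Σ Vᵀ` gives `tr(OᵀH) = ∑ σᵢ` and `tr(HᵀH) = ∑ σᵢ²`, and `σᵢ ≤ 1` because
`I - HᵀH = ((I - U₂U₂ᵀ)U₁)ᵀ((I - U₂U₂ᵀ)U₁)` is positive semidefinite. Hence `∑ σᵢ² ≤ ∑ σᵢ`.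
-/

theorem exists_orthonormalBasis_eq_norm_smul {𝕜 E ι : Type*} [RCLike 𝕜] [NormedAddCommGroup E]
    [InnerProductSpace 𝕜 E] [FiniteDimensional 𝕜 E] [Fintype ι]
    (card_ι : Module.finrank 𝕜 E = Fintype.card ι) {w : ι → E}
    (hw : Pairwise fun i j => inner 𝕜 (w i) (w j) = 0) :
    ∃ b : OrthonormalBasis ι 𝕜 E, ∀ j, w j = (‖w j‖ : 𝕜) • b j := by
  set v : ι → E := fun j => (‖w j‖⁻¹ : 𝕜) • w j
  have hv : Orthonormal 𝕜 (({j | w j ≠ 0} : Set ι).domRestrict v) := by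
    refine ⟨fun j => norm_smul_inv_norm j.2, fun i j hij => ?_⟩
    simp [v, inner_smul_left, inner_smul_right, hw (Subtype.coe_ne_coe.mpr hij)]
  obtain ⟨b, hb⟩ := hv.exists_orthonormalBasis_extension_of_card_eq card_ι
  refine ⟨b, fun j => ?_⟩
  by_cases hj : w j = 0
  · simp [hj]
  · rw [hb j hj, smul_smul, mul_inv_cancel₀ (by simpa using hj), one_smul]

namespace Matrix

variable {ι : Type*} [Fintype ι] [DecidableEq ι]

theorem exists_mem_orthogonalGroup_mul_diagonal_of_isDiag {W : Matrix ι ι ℝ}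
    (hW : (Wᵀ * W).IsDiag) :
    ∃ B ∈ orthogonalGroup ι ℝ, ∃ σ : ι → ℝ, 0 ≤ σ ∧ W = B * diagonal σ := by
  set w : ι → EuclideanSpace ℝ ι := fun j => WithLp.toLp 2 (W.col j)
  have hw : Pairwise fun i j => inner ℝ (w i) (w j) = 0 := fun i j hij => by
    simpa [w, EuclideanSpace.inner_toLp_toLp, mul_apply, dotProduct, mul_comm] using hW hij
  obtain ⟨b, hb⟩ := exists_orthonormalBasis_eq_norm_smul (by simp) hw
  refine ⟨(EuclideanSpace.basisFun ι ℝ).toBasis.toMatrix b.toBasis,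
    (EuclideanSpace.basisFun ι ℝ).toMatrix_orthonormalBasis_mem_orthogonal b,
    fun j => ‖w j‖, fun j => norm_nonneg _, ?_⟩
  ext i j
  simpa [mul_diagonal, Module.Basis.toMatrix_apply, mul_comm, w] using congrArg (· i) (hb j)

theorem exists_svd (H : Matrix ι ι ℝ) :
    ∃ B ∈ orthogonalGroup ι ℝ, ∃ V ∈ orthogonalGroup ι ℝ, ∃ σ : ι → ℝ,
      0 ≤ σ ∧ H = B * diagonal σ * Vᵀ := by
  have hS : (Hᵀ * H).IsHermitian := by
    simpa [conjTranspose_eq_transpose_of_trivial] using isHermitian_conjTranspose_mul_self H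
  set V : Matrix ι ι ℝ := (hS.eigenvectorUnitary : Matrix ι ι ℝ)
  have hV : V ∈ orthogonalGroup ι ℝ := hS.eigenvectorUnitary.2
  have hdiag : ((H * V)ᵀ * (H * V)).IsDiag := by
    have h := hS.conjStarAlgAut_star_eigenvectorUnitary
    rw [Unitary.conjStarAlgAut_star_apply] at h
    simp only [star_eq_conjTranspose, conjTranspose_eq_transpose_of_trivial] at h
    rw [transpose_mul, Matrix.mul_assoc, ← Matrix.mul_assoc Hᵀ, ← Matrix.mul_assoc, h]
    exact isDiag_diagonal _
  obtain ⟨B, hB, σ, hσ, hHV⟩ := exists_mem_orthogonalGroup_mul_diagonal_of_isDiag hdiag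
  refine ⟨B, hB, V, hV, σ, hσ, ?_⟩
  rw [← hHV, Matrix.mul_assoc, (mem_orthogonalGroup_iff ι ℝ).mp hV, Matrix.mul_one]

theorem exists_mem_orthogonalGroup_trace_transpose_mul_self_le {H : Matrix ι ι ℝ}
    (hH : (1 - Hᵀ * H).PosSemidef) :
    ∃ O ∈ orthogonalGroup ι ℝ, trace (Hᵀ * H) ≤ trace (Oᵀ * H) := by
  obtain ⟨B, hB, V, hV, σ, hσ, rfl⟩ := exists_svd H
  have hBB : Bᵀ * B = 1 := (mem_orthogonalGroup_iff' ι ℝ).mp hB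
  have hVV : Vᵀ * V = 1 := (mem_orthogonalGroup_iff' ι ℝ).mp hV
  have hVV' : V * Vᵀ = 1 := (mem_orthogonalGroup_iff ι ℝ).mp hV
  have htrace : ∀ A, trace (V * A * Vᵀ) = trace A := fun A => by
    rw [trace_mul_comm, ← Matrix.mul_assoc, hVV, Matrix.one_mul]
  have hHH : (B * diagonal σ * Vᵀ)ᵀ * (B * diagonal σ * Vᵀ) = V * diagonal (σ * σ) * Vᵀ := by
    simp only [transpose_mul, transpose_transpose, diagonal_transpose, Matrix.mul_assoc]
    rw [← Matrix.mul_assoc Bᵀ, hBB, Matrix.one_mul, ← Matrix.mul_assoc (diagonal σ),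
      diagonal_mul_diagonal]
    rfl
  have hσ1 : ∀ j, σ j ≤ 1 := fun j => by
    have h := hH.conjTranspose_mul_mul_same V
    rw [hHH, conjTranspose_eq_transpose_of_trivial, Matrix.mul_sub, Matrix.sub_mul,
      Matrix.mul_one, hVV, ← Matrix.mul_assoc, ← Matrix.mul_assoc, hVV, Matrix.one_mul,
      Matrix.mul_assoc, hVV, Matrix.mul_one, ← diagonal_one, diagonal_sub,
      posSemidef_diagonal_iff] at h
    nlinarith [h j, hσ j, Pi.mul_apply σ σ j]
  refine ⟨B * Vᵀ, ?_, ?_⟩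
  · rw [mem_orthogonalGroup_iff', transpose_mul, transpose_transpose, Matrix.mul_assoc, ← Matrix.mul_assoc Bᵀ, hBB,
      Matrix.one_mul, hVV']
  · have hOH : (B * Vᵀ)ᵀ * (B * diagonal σ * Vᵀ) = V * diagonal σ * Vᵀ := by
      rw [transpose_mul, transpose_transpose, Matrix.mul_assoc V, ← Matrix.mul_assoc Bᵀ,
        ← Matrix.mul_assoc Bᵀ, hBB, Matrix.one_mul, Matrix.mul_assoc]
    rw [hHH, hOH, htrace, htrace, trace_diagonal, trace_diagonal]
    exact Finset.sum_le_sum fun j _ => by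
      simpa using mul_le_of_le_one_right (hσ j) (hσ1 j)

variable {m k : Type*} [Fintype m] [Fintype k] [DecidableEq k]

theorem isIdempotentElem_mul_transpose {F : Matrix m k ℝ} (hF : Fᵀ * F = 1) :
    IsIdempotentElem (F * Fᵀ) := by
  rw [IsIdempotentElem, Matrix.mul_assoc, ← Matrix.mul_assoc Fᵀ, hF, Matrix.one_mul]

variable [DecidableEq m]

theorem transpose_mul_self_one_sub_mul_transpose {F : Matrix m k ℝ} (hF : Fᵀ * F = 1) :
    (1 - F * Fᵀ)ᵀ * (1 - F * Fᵀ) = 1 - F * Fᵀ := by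
  rw [transpose_sub, transpose_one, transpose_mul, transpose_transpose,
    (isIdempotentElem_mul_transpose hF).one_sub]

theorem posSemidef_one_sub_transpose_mul_self_transpose_mul {E F : Matrix m k ℝ}
    (hE : Eᵀ * E = 1) (hF : Fᵀ * F = 1) :
    (1 - (Fᵀ * E)ᵀ * (Fᵀ * E)).PosSemidef := by
  have h : ((1 - F * Fᵀ) * E)ᵀ * ((1 - F * Fᵀ) * E) = 1 - (Fᵀ * E)ᵀ * (Fᵀ * E) := by
    rw [transpose_mul, Matrix.mul_assoc, ← Matrix.mul_assoc (1 - F * Fᵀ)ᵀ,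
      transpose_mul_self_one_sub_mul_transpose hF, Matrix.sub_mul, Matrix.mul_sub,
      Matrix.one_mul, hE]
    simp only [transpose_mul, transpose_transpose, Matrix.mul_assoc]
  rw [← h, ← conjTranspose_eq_transpose_of_trivial]
  exact posSemidef_conjTranspose_mul_self _

end Matrix

namespace MJ

variable {m k : ℕ}

theorem frob_sq_eq_trace (A : Matrix (Fin m) (Fin k) ℝ) : frob A ^ 2 = trace (Aᵀ * A) := by
  rw [frob, Real.sq_sqrt (by positivity), Finset.sum_comm]
  simp only [trace, diag, mul_apply, transpose_apply, sq]

theorem frob_sub_mul_sq {E F : Matrix (Fin m) (Fin k) ℝ} (hE : Eᵀ * E = 1) (hF : Fᵀ * F = 1)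
    {O : Matrix (Fin k) (Fin k) ℝ} (hO : Oᵀ * O = 1) :
    frob (E - F * O) ^ 2 = 2 * k - 2 * trace (Oᵀ * (Fᵀ * E)) := by
  have hFO : (F * O)ᵀ * (F * O) = 1 := by
    rw [transpose_mul, Matrix.mul_assoc, ← Matrix.mul_assoc Fᵀ, hF, Matrix.one_mul, hO]
  have hcross : trace (Eᵀ * (F * O)) = trace (Oᵀ * (Fᵀ * E)) := by
    rw [← trace_transpose, transpose_mul, transpose_mul, transpose_transpose, Matrix.mul_assoc]
  rw [frob_sq_eq_trace, transpose_sub, Matrix.sub_mul, Matrix.mul_sub, Matrix.mul_sub, hE, hFO,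
    trace_sub, trace_sub, trace_sub, hcross, transpose_mul, Matrix.mul_assoc, trace_one]
  simp only [Fintype.card_fin]
  ring

theorem frob_sinThetaMat_sq {E F : Matrix (Fin m) (Fin k) ℝ} (hE : Eᵀ * E = 1)
    (hF : Fᵀ * F = 1) :
    frob (sinThetaMat E F) ^ 2 = k - trace ((Fᵀ * E)ᵀ * (Fᵀ * E)) := by
  have hP : IsIdempotentElem (F * Fᵀ) := isIdempotentElem_mul_transpose hF
  have hPt : (F * Fᵀ)ᵀ = F * Fᵀ := by rw [transpose_mul, transpose_transpose]
  calc frob (sinThetaMat E F) ^ 2 = trace (F * Fᵀ * ((1 - E * Eᵀ) * (F * Fᵀ))) := by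
        rw [frob_sq_eq_trace, sinThetaMat, transpose_mul, hPt, Matrix.mul_assoc,
          ← Matrix.mul_assoc (1 - E * Eᵀ)ᵀ, transpose_mul_self_one_sub_mul_transpose hE]
    _ = trace ((1 - E * Eᵀ) * (F * Fᵀ)) := by rw [trace_mul_comm, Matrix.mul_assoc, hP.eq]
    _ = trace (Fᵀ * F) - trace (Eᵀ * (F * Fᵀ) * E) := by
        rw [Matrix.sub_mul, trace_sub, Matrix.one_mul, trace_mul_comm F, Matrix.mul_assoc,
          trace_mul_comm E]
    _ = k - trace ((Fᵀ * E)ᵀ * (Fᵀ * E)) := by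
        simp only [hF, trace_one, Fintype.card_fin, transpose_mul, transpose_transpose,
          Matrix.mul_assoc]

end MJ

open MJ in
theorem stmt4_general {n r : ℕ} (U1 U2 : Matrix (Fin n) (Fin r) ℝ)
    (h1 : U1ᵀ * U1 = 1) (h2 : U2ᵀ * U2 = 1) :
    ∃ O : Matrix (Fin r) (Fin r) ℝ, Oᵀ * O = 1 ∧
      frob (U1 - U2 * O) ^ 2 ≤ 2 * frob (sinThetaMat U1 U2) ^ 2 := by
  obtain ⟨O, hO, hle⟩ := exists_mem_orthogonalGroup_trace_transpose_mul_self_le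
    (posSemidef_one_sub_transpose_mul_self_transpose_mul h1 h2)
  have hOO : Oᵀ * O = 1 := (mem_orthogonalGroup_iff' (Fin r) ℝ).mp hO
  refine ⟨O, hOO, ?_⟩
  rw [frob_sub_mul_sq h1 h2 hOO, frob_sinThetaMat_sq h1 h2]
  linarith

open MJ in
/-- alignment of orthonormal frames by an orthogonal matrix. -/
theorem stmt4 {n r : ℕ} (hnr : r ≤ n) (U1 U2 : Matrix (Fin n) (Fin r) ℝ)
    (h1 : U1ᵀ * U1 = 1) (h2 : U2ᵀ * U2 = 1) :
    ∃ O : Matrix (Fin r) (Fin r) ℝ, Oᵀ * O = 1 ∧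
      frob (U1 - U2 * O) ^ 2 ≤ 2 * frob (sinThetaMat U1 U2) ^ 2 :=
  stmt4_general U1 U2 h1 h2
end
end

section
/- Let P ∈ ℝ^{n×n} be a row-stochastic matrix with stationary distribution π (π^T P = π^T, all π_i > 0), π_min = min_i π_i, and stationary frequency matrix F = diag(π) P. Let π̂ ∈ ℝ^n and F̂ ∈ ℝ^{n×n} satisfy ‖π̂ − π‖_∞ ≤ ε and ‖F̂ − F‖ ≤ ε for some 0 < ε ≤ π_min/2 (so in particular min_i π̂_i ≥ π_min/2 > 0), and define P̂ = diag(π̂)^{-1} F̂. Then ‖P̂ − P‖ ≤ 4 π_min^{-1} ‖P‖ ε, where ‖·‖ denotes the spectral norm and ‖·‖_∞ the entrywise max norm of a vector. -/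
open scoped BigOperators
open Matrix

noncomputable section

/-!
With `D = diag π` and `D̂ = diag π̂` we have `P̂ - P = D̂⁻¹ (F̂ - D P) + D̂⁻¹ (D - D̂) P`.
Since `π̂ ≥ π_min / 2` entrywise, the two diagonal factors have spectral norm at most `2 / π_min`
and `2 ε / π_min`, so `‖P̂ - P‖ ≤ 2 ε (1 + ‖P‖) / π_min`; finally `1 ≤ ‖P‖` because `P` fixes
the all-ones vector.
-/

open scoped Matrix.Norms.L2Operator

namespace MJ

theorem l2_eq_norm_toLp {k : ℕ} (v : Fin k → ℝ) : l2 v = ‖WithLp.toLp 2 v‖ := by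
  simp [l2, EuclideanSpace.norm_eq]

theorem spec_eq_l2_opNorm {m k : ℕ} (A : Matrix (Fin m) (Fin k) ℝ) : spec A = ‖A‖ := by
  rw [Matrix.l2_opNorm_def, ← ContinuousLinearMap.sSup_unitClosedBall_eq_norm, spec]
  congr 1
  ext c
  constructor
  · rintro ⟨x, hx, rfl⟩
    refine ⟨WithLp.toLp 2 x, by simpa [l2_eq_norm_toLp] using hx, ?_⟩
    simp [l2_eq_norm_toLp]
  · rintro ⟨x, hx, rfl⟩
    exact ⟨x.ofLp, by simpa [l2_eq_norm_toLp] using hx, by rw [l2_eq_norm_toLp]; rfl⟩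

end MJ

namespace Matrix

variable {ι : Type*} [Fintype ι] [DecidableEq ι]

theorem l2_opNorm_diagonal_le {v : ι → ℝ} {b : ℝ} (hb : 0 ≤ b) (hv : ∀ i, |v i| ≤ b) :
    ‖diagonal v‖ ≤ b := by
  rw [l2_opNorm_diagonal]
  exact (pi_norm_le_iff_of_nonneg hb).2 hv

theorem one_le_l2_opNorm_of_sum_row_eq_one [Nonempty ι] {P : Matrix ι ι ℝ}
    (hP : ∀ i, ∑ j, P i j = 1) : 1 ≤ ‖P‖ := by
  have hfix : P *ᵥ (fun _ => 1) = fun _ => 1 := funext fun i => by simp [mulVec, dotProduct, hP i]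
  have hpos : 0 < ‖WithLp.toLp 2 (fun _ : ι => (1 : ℝ))‖ := by
    simp [norm_pos_iff, funext_iff]
  have h := P.l2_opNorm_mulVec (WithLp.toLp 2 fun _ => 1)
  rw [WithLp.ofLp_toLp, hfix] at h
  exact (le_mul_iff_one_le_left hpos).1 h

theorem diagonal_inv_mul_sub_eq {π π' : ι → ℝ} (hπ' : ∀ i, π' i ≠ 0) (F P : Matrix ι ι ℝ) :
    diagonal (fun i => (π' i)⁻¹) * F - P =
      diagonal (fun i => (π' i)⁻¹) * (F - diagonal π * P) +
        diagonal (fun i => (π i - π' i) / π' i) * P := by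
  have hdiag : diagonal (fun i => (π' i)⁻¹) * diagonal π - 1 =
      diagonal (fun i => (π i - π' i) / π' i) := by
    rw [diagonal_mul_diagonal, ← diagonal_one, diagonal_sub]
    congr 1
    funext i
    field_simp [hπ' i]
  rw [← hdiag, Matrix.mul_sub, Matrix.sub_mul, Matrix.mul_assoc, Matrix.one_mul]
  abel

theorem l2_opNorm_diagonal_inv_mul_sub_le [Nonempty ι] {π π' : ι → ℝ} {F P : Matrix ι ι ℝ}
    {c δ ε : ℝ} (hc : 0 < c) (hπ' : ∀ i, c ≤ π' i) (hδ : ∀ i, |π' i - π i| ≤ δ)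
    (hF : ‖F - diagonal π * P‖ ≤ ε) :
    ‖diagonal (fun i => (π' i)⁻¹) * F - P‖ ≤ (ε + δ * ‖P‖) / c := by
  have hπ'_pos : ∀ i, 0 < π' i := fun i => hc.trans_le (hπ' i)
  have hδ_nonneg : 0 ≤ δ := (abs_nonneg _).trans (hδ (Classical.arbitrary ι))
  have hinv : ‖diagonal fun i => (π' i)⁻¹‖ ≤ 1 / c := by
    refine l2_opNorm_diagonal_le (by positivity) fun i => ?_
    rw [abs_of_pos (inv_pos.2 (hπ'_pos i)), one_div]
    exact inv_anti₀ hc (hπ' i)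
  have hrel : ‖diagonal fun i => (π i - π' i) / π' i‖ ≤ δ / c := by
    refine l2_opNorm_diagonal_le (by positivity) fun i => ?_
    rw [abs_div, abs_of_pos (hπ'_pos i), abs_sub_comm]
    exact div_le_div₀ hδ_nonneg (hδ i) hc (hπ' i)
  rw [diagonal_inv_mul_sub_eq fun i => (hπ'_pos i).ne']
  calc _ ≤ ‖diagonal fun i => (π' i)⁻¹‖ * ‖F - diagonal π * P‖ +
          ‖diagonal fun i => (π i - π' i) / π' i‖ * ‖P‖ :=
        (norm_add_le _ _).trans (add_le_add (l2_opNorm_mul _ _) (l2_opNorm_mul _ _))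
    _ ≤ 1 / c * ε + δ / c * ‖P‖ := by gcongr
    _ = (ε + δ * ‖P‖) / c := by ring

end Matrix

open MJ in
theorem stmt14_general {n : ℕ} (P : Matrix (Fin n) (Fin n) ℝ) (piv : Fin n → ℝ)
    (hP : RowStochastic P)
    (pimin : ℝ) (hpimin : pimin = ⨅ i, piv i)
    (pih : Fin n → ℝ) (Fh : Matrix (Fin n) (Fin n) ℝ)
    (ε : ℝ) (hε : 0 < ε) (hεle : ε ≤ pimin / 2)
    (hpih : ∀ i, |pih i - piv i| ≤ ε)
    (hFh : spec (Fh - Matrix.diagonal piv * P) ≤ ε) :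
    spec (Matrix.diagonal (fun i => (pih i)⁻¹) * Fh - P) ≤ 4 * pimin⁻¹ * spec P * ε := by
  have hpimin_pos : 0 < pimin := by linarith
  have : Nonempty (Fin n) := by
    by_contra h
    rw [not_nonempty_iff] at h
    simp [hpimin, Real.iInf_of_isEmpty] at hpimin_pos
  have hpimin_le : ∀ i, pimin ≤ piv i := fun i => hpimin ▸ ciInf_le (Finite.bddBelow_range piv) i
  have hpih_ge : ∀ i, pimin / 2 ≤ pih i := fun i => by
    linarith [hpimin_le i, (abs_le.1 (hpih i)).1]
  have hP_norm : 1 ≤ ‖P‖ := Matrix.one_le_l2_opNorm_of_sum_row_eq_one hP.2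
  simp only [spec_eq_l2_opNorm] at hFh ⊢
  calc _ ≤ (ε + ε * ‖P‖) / (pimin / 2) :=
        Matrix.l2_opNorm_diagonal_inv_mul_sub_le (by positivity) hpih_ge hpih hFh
    _ ≤ 4 * pimin⁻¹ * ‖P‖ * ε := by
        rw [div_le_iff₀ (by positivity)]
        field_simp
        nlinarith

open MJ in
/-- transition-matrix error from frequency-matrix and distribution errors. -/
theorem stmt14 {n : ℕ} (P : Matrix (Fin n) (Fin n) ℝ) (piv : Fin n → ℝ)
    (hP : RowStochastic P) (hpos : ∀ i, 0 < piv i) (hpiv : IsStationary P piv)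
    (pimin : ℝ) (hpimin : pimin = ⨅ i, piv i)
    (pih : Fin n → ℝ) (Fh : Matrix (Fin n) (Fin n) ℝ)
    (ε : ℝ) (hε : 0 < ε) (hεle : ε ≤ pimin / 2)
    (hpih : ∀ i, |pih i - piv i| ≤ ε)
    (hFh : spec (Fh - Matrix.diagonal piv * P) ≤ ε) :
    spec (Matrix.diagonal (fun i => (pih i)⁻¹) * Fh - P) ≤ 4 * pimin⁻¹ * spec P * ε :=
  stmt14_general P piv hP pimin hpimin pih Fh ε hε hεle hpih hFh
end
end

section
/- Let P = P̄ + Δ where P̄ ∈ ℝ^{n×n} is r-aggregatable with respect to the partition {Ω_1, ..., Ω_r} of [n] (i.e., P̄(i,:) = P̄(j,:) whenever i, j lie in the same Ω_s). Let P̂ ∈ ℝ^{n×n} be arbitrary, and let P~ ∈ ℝ^{n×n} be any matrix such that for each s ∈ [r] and each i ∈ Ω_s, the row P~(i,:) is a convex combination of the rows {P̂(j,:) : j ∈ Ω_s}. Then ‖P − P~‖_∞ ≤ 3 ‖P̂ − P‖_∞ + 2 ‖Δ‖_∞, where ‖A‖_∞ = max_i Σ_j |A(i,j)|. -/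
open scoped BigOperators
open Matrix

noncomputable section

open MJ in
lemma rowsum_le_norm {m k : ℕ} (A : Matrix (Fin m) (Fin k) ℝ) (i : Fin m) :
    ∑ j, |A i j| ≤ rowSumNorm A := by
  unfold MJ.rowSumNorm
  exact le_ciSup (f := fun i => ∑ j, |A i j|) (Set.Finite.bddAbove (Set.finite_range _)) i

open MJ in
lemma rowSumNorm_nonneg' {m k : ℕ} (A : Matrix (Fin m) (Fin k) ℝ) :
    0 ≤ rowSumNorm A := by
  rcases isEmpty_or_nonempty (Fin m) with h | h
  · unfold MJ.rowSumNorm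
    rw [Real.iSup_of_isEmpty]
  · obtain ⟨i⟩ := h
    exact (Finset.sum_nonneg fun j _ => abs_nonneg _).trans (rowsum_le_norm A i)

open MJ in
/-- deterministic approximation error of the aggregated re-estimate. -/
theorem stmt17 {n r : ℕ} (Pb Δ Ph Pt : Matrix (Fin n) (Fin n) ℝ)
    (Ω : Fin r → Finset (Fin n)) (hΩ : IsPartition Ω) (hagg : Aggregatable Pb Ω)
    (hconv : ∀ s : Fin r, ∀ i ∈ Ω s, ∃ c : Fin n → ℝ,
      (∀ j ∈ Ω s, 0 ≤ c j) ∧ (∑ j ∈ Ω s, c j) = 1 ∧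
      ∀ col, Pt i col = ∑ j ∈ Ω s, c j * Ph j col) :
    rowSumNorm ((Pb + Δ) - Pt) ≤ 3 * rowSumNorm (Ph - (Pb + Δ)) + 2 * rowSumNorm Δ := by
  set M := rowSumNorm (Ph - (Pb + Δ)) with hM
  set D := rowSumNorm Δ with hD
  have hM0 : 0 ≤ M := rowSumNorm_nonneg' _
  have hD0 : 0 ≤ D := rowSumNorm_nonneg' _
  apply Real.iSup_le _ (by linarith)
  intro i
  have hi : i ∈ Finset.univ.biUnion Ω := by rw [hΩ.2]; exact Finset.mem_univ i
  obtain ⟨s, -, his⟩ := Finset.mem_biUnion.mp hi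
  obtain ⟨c, hc0, hc1, hrow⟩ := hconv s i his
  have key : ∀ col, ((Pb + Δ) - Pt) i col =
      (∑ j ∈ Ω s, c j * (Pb j col - Ph j col)) + Δ i col := by
    intro col
    have hPb : Pb i col = ∑ j ∈ Ω s, c j * Pb j col := by
      have : ∀ j ∈ Ω s, c j * Pb j col = c j * Pb i col := by
        intro j hj
        rw [hagg s j hj i his col]
      rw [Finset.sum_congr rfl this, ← Finset.sum_mul, hc1, one_mul]
    simp only [Matrix.sub_apply, Matrix.add_apply, hrow col]
    rw [hPb]
    have h2 : ∑ j ∈ Ω s, c j * (Pb j col - Ph j col)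
        = ∑ j ∈ Ω s, c j * Pb j col - ∑ j ∈ Ω s, c j * Ph j col := by
      rw [← Finset.sum_sub_distrib]
      exact Finset.sum_congr rfl fun j _ => by ring
    rw [h2]; ring
  calc ∑ col, |((Pb + Δ) - Pt) i col|
      ≤ ∑ col, ((∑ j ∈ Ω s, c j * |Pb j col - Ph j col|) + |Δ i col|) := by
        apply Finset.sum_le_sum
        intro col _
        rw [key col]
        refine (abs_add_le _ _).trans (add_le_add ?_ le_rfl)
        refine (Finset.abs_sum_le_sum_abs _ _).trans ?_
        apply Finset.sum_le_sum
        intro j hj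
        rw [abs_mul, abs_of_nonneg (hc0 j hj)]
    _ = (∑ j ∈ Ω s, c j * ∑ col, |Pb j col - Ph j col|) + ∑ col, |Δ i col| := by
        rw [Finset.sum_add_distrib, Finset.sum_comm]
        simp [Finset.mul_sum]
    _ ≤ (∑ j ∈ Ω s, c j * (M + D)) + D := by
        refine add_le_add ?_ (rowsum_le_norm Δ i)
        apply Finset.sum_le_sum
        intro j hj
        refine mul_le_mul_of_nonneg_left ?_ (hc0 j hj)
        calc ∑ col, |Pb j col - Ph j col|
            ≤ ∑ col, (|(Ph - (Pb + Δ)) j col| + |Δ j col|) := by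
              apply Finset.sum_le_sum
              intro col _
              have : Pb j col - Ph j col = -((Ph - (Pb + Δ)) j col) - Δ j col := by
                simp [Matrix.sub_apply, Matrix.add_apply]; ring
              rw [this]
              refine (abs_sub _ _).trans ?_
              rw [abs_neg]
          _ = (∑ col, |(Ph - (Pb + Δ)) j col|) + ∑ col, |Δ j col| :=
              Finset.sum_add_distrib
          _ ≤ M + D := add_le_add (rowsum_le_norm _ j) (rowsum_le_norm Δ j)
    _ = (M + D) + D := by rw [← Finset.sum_mul, hc1, one_mul]
    _ ≤ 3 * M + 2 * D := by linarith
end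
end
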